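/- arXiv:1401.5728 — 13 statements merged into one kernel-verified Lean document; each statement's English description precedes it below -/
import Mathlib

section
/- Suppose given groups A₁, A₂, A₃, A₄ with homomorphisms f₁₂ : A₁ → A₂, f₁₃ : A₁ → A₃, f₂₄ : A₂ → A₄, f₃₄ : A₃ → A₄ satisfying f₂₄ ∘ f₁₂ = f₃₄ ∘ f₁₃, such that the induced map A₁ → {(a₂,a₃) ∈ A₂ × A₃ : f₂₄(a₂) = f₃₄(a₃)} is bijective. Suppose also given sets X₁, X₂, X₃, X₄ with an action of Aᵢ on Xᵢ for each i, and maps g₁₂ : X₁ → X₂, g₁₃ : X₁ → X₃, g₂₄ : X₂ → X₄, g₃₄ : X₃ → X₄ with g₂₄ ∘ g₁₂ = g₃₄ ∘ g₁₃, each gᵢⱼ equivariant over fᵢⱼ (i.e. gᵢⱼ(a·x) = fᵢⱼ(a)·gᵢⱼ(x)), and such that the induced map X₁ → {(x₂,x₃) ∈ X₂ × X₃ : g₂₄(x₂) = g₃₄(x₃)} is bijective. If (a) every element of A₄ can be written as f₂₄(a₂)·f₃₄(a₃) for some a₂ ∈ A₂, a₃ ∈ A₃, and (b) the action of A₄ on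 X₄ is free (any element of A₄ fixing some point of X₄ is the identity), then the induced map of orbit spaces A₁\X₁ → (A₂\X₂) ×_{A₄\X₄} (A₃\X₃) is bijective; that is, the commutative square of quotient sets Aᵢ\Xᵢ is cartesian. -/
/-- Lemma "ElemCart": a commutative square of orbit-space quotients is cartesian,
given cartesian squares of groups and of sets, provided `A₄ = f₂₄(A₂)·f₃₄(A₃)` and
the action of `A₄` on `X₄` is free. -/
theorem stmt0 {A₁ A₂ A₃ A₄ X₁ X₂ X₃ X₄ : Type*}
    [Group A₁] [Group A₂] [Group A₃] [Group A₄]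
    [MulAction A₁ X₁] [MulAction A₂ X₂] [MulAction A₃ X₃] [MulAction A₄ X₄]
    (f₁₂ : A₁ →* A₂) (f₁₃ : A₁ →* A₃) (f₂₄ : A₂ →* A₄) (f₃₄ : A₃ →* A₄)
    (hfcomm : ∀ a : A₁, f₂₄ (f₁₂ a) = f₃₄ (f₁₃ a))
    (hfbij : Function.Bijective
      (fun a : A₁ => (⟨(f₁₂ a, f₁₃ a), hfcomm a⟩ : {p : A₂ × A₃ // f₂₄ p.1 = f₃₄ p.2})))
    (g₁₂ : X₁ → X₂) (g₁₃ : X₁ → X₃) (g₂₄ : X₂ → X₄) (g₃₄ : X₃ → X₄)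
    (hgcomm : ∀ x : X₁, g₂₄ (g₁₂ x) = g₃₄ (g₁₃ x))
    (heq₁₂ : ∀ (a : A₁) (x : X₁), g₁₂ (a • x) = f₁₂ a • g₁₂ x)
    (heq₁₃ : ∀ (a : A₁) (x : X₁), g₁₃ (a • x) = f₁₃ a • g₁₃ x)
    (heq₂₄ : ∀ (a : A₂) (x : X₂), g₂₄ (a • x) = f₂₄ a • g₂₄ x)
    (heq₃₄ : ∀ (a : A₃) (x : X₃), g₃₄ (a • x) = f₃₄ a • g₃₄ x)
    (hgbij : Function.Bijective
      (fun x : X₁ => (⟨(g₁₂ x, g₁₃ x), hgcomm x⟩ : {p : X₂ × X₃ // g₂₄ p.1 = g₃₄ p.2})))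
    (hgen : ∀ a₄ : A₄, ∃ (a₂ : A₂) (a₃ : A₃), a₄ = f₂₄ a₂ * f₃₄ a₃)
    (hfree : ∀ (a₄ : A₄) (x₄ : X₄), a₄ • x₄ = x₄ → a₄ = 1) :
    (∀ x x' : X₁,
        Quotient.mk (MulAction.orbitRel A₂ X₂) (g₁₂ x) = Quotient.mk _ (g₁₂ x') →
        Quotient.mk (MulAction.orbitRel A₃ X₃) (g₁₃ x) = Quotient.mk _ (g₁₃ x') →
        Quotient.mk (MulAction.orbitRel A₁ X₁) x = Quotient.mk _ x') ∧
    (∀ (x₂ : X₂) (x₃ : X₃),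
        Quotient.mk (MulAction.orbitRel A₄ X₄) (g₂₄ x₂) = Quotient.mk _ (g₃₄ x₃) →
        ∃ x₁ : X₁,
          Quotient.mk (MulAction.orbitRel A₂ X₂) (g₁₂ x₁) = Quotient.mk _ x₂ ∧
          Quotient.mk (MulAction.orbitRel A₃ X₃) (g₁₃ x₁) = Quotient.mk _ x₃) := by
  constructor
  · intro x x' h2 h3
    rw [Quotient.eq, MulAction.orbitRel_apply, MulAction.mem_orbit_iff] at h2 h3 ⊢
    obtain ⟨a₂, ha₂⟩ := h2
    obtain ⟨a₃, ha₃⟩ := h3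
    have hkey : f₂₄ a₂ = f₃₄ a₃ := by
      have h4 : f₂₄ a₂ • g₂₄ (g₁₂ x') = f₃₄ a₃ • g₂₄ (g₁₂ x') := by
        rw [← heq₂₄, ha₂, hgcomm, ← ha₃, heq₃₄, hgcomm]
      have := hfree ((f₃₄ a₃)⁻¹ * f₂₄ a₂) (g₂₄ (g₁₂ x')) (by rw [mul_smul, h4, inv_smul_smul])
      exact (inv_mul_eq_one.mp this).symm
    obtain ⟨a, ha⟩ := hfbij.2 ⟨(a₂, a₃), hkey⟩
    have ha2 : f₁₂ a = a₂ := congrArg (fun p => p.1.1) ha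
    have ha3 : f₁₃ a = a₃ := congrArg (fun p => p.1.2) ha
    refine ⟨a, ?_⟩
    apply hgbij.1 (a₁ := a • x') (a₂ := x)
    apply Subtype.ext
    apply Prod.ext
    · simp only [heq₁₂, ha2, ha₂]
    · simp only [heq₁₃, ha3, ha₃]
  · intro x₂ x₃ h
    rw [Quotient.eq, MulAction.orbitRel_apply, MulAction.mem_orbit_iff] at h
    obtain ⟨a₄, ha₄⟩ := h
    obtain ⟨a₂, a₃, hgen'⟩ := hgen a₄
    have hfib : g₂₄ (a₂⁻¹ • x₂) = g₃₄ (a₃ • x₃) := by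
      rw [heq₂₄, heq₃₄, ← ha₄, hgen', map_inv, mul_smul, inv_smul_smul]
    obtain ⟨x₁, hx₁⟩ := hgbij.2 ⟨(a₂⁻¹ • x₂, a₃ • x₃), hfib⟩
    have h2 : g₁₂ x₁ = a₂⁻¹ • x₂ := congrArg (fun p => p.1.1) hx₁
    have h3 : g₁₃ x₁ = a₃ • x₃ := congrArg (fun p => p.1.2) hx₁
    refine ⟨x₁, ?_, ?_⟩
    · rw [Quotient.eq, MulAction.orbitRel_apply, MulAction.mem_orbit_iff]
      exact ⟨a₂⁻¹, h2.symm⟩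
    · rw [Quotient.eq, MulAction.orbitRel_apply, MulAction.mem_orbit_iff]
      exact ⟨a₃, h3.symm⟩
end

section
/- Let G be a finite group and let S and T be G-sets. If f : ℤ[S] → ℤ[T] is an additive map such that Σ_{g∈G} g•f = 0 in Hom(ℤ[S],ℤ[T]), then f lies in the additive subgroup of Hom(ℤ[S],ℤ[T]) generated by the elements g•h − h with g ∈ G and h ∈ Hom(ℤ[S],ℤ[T]). Equivalently, the Tate cohomology group Ĥ^{-1}(G, Hom(ℤ[S],ℤ[T])) vanishes. -/
/-- The action of `g : G` on `ℤ[S]`, permuting the basis elements. -/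
noncomputable def permHom {G : Type*} [Group G] {S : Type*} [MulAction G S]
    (g : G) : (S →₀ ℤ) →+ (S →₀ ℤ) :=
  Finsupp.mapDomain.addMonoidHom (fun s => g • s)

/-- The action of `g : G` on `Hom(ℤ[S], ℤ[T])`: `(g • f)(m) = g • f (g⁻¹ • m)`. -/
noncomputable def homAct {G S T : Type*} [Group G] [MulAction G S] [MulAction G T]
    (g : G) (f : (S →₀ ℤ) →+ (T →₀ ℤ)) : (S →₀ ℤ) →+ (T →₀ ℤ) :=
  (permHom g).comp (f.comp (permHom g⁻¹))

section Helpers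

open scoped Classical

variable {G S T : Type*} [Group G] [MulAction G S] [MulAction G T]

lemma permHom_single (g : G) (s : S) (n : ℤ) :
    permHom g (Finsupp.single s n) = Finsupp.single (g • s) n := by
  simp [permHom]

lemma permHom_apply_smul (g : G) (v : S →₀ ℤ) (t : S) :
    permHom g v (g • t) = v t := by
  simpa [permHom] using Finsupp.mapDomain_apply (MulAction.injective g) v t

lemma homAct_single_apply (g : G) (f : (S →₀ ℤ) →+ (T →₀ ℤ)) (s : S) (t : T) :
    homAct g f (Finsupp.single s 1) t = f (Finsupp.single (g⁻¹ • s) 1) (g⁻¹ • t) := by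
  have ht : t = g • (g⁻¹ • t) := by simp
  rw [homAct]
  simp only [AddMonoidHom.comp_apply]
  rw [permHom_single]
  conv_lhs => rw [ht]
  rw [permHom_apply_smul]

/-- Orbit representative of `x : S × T`. -/
noncomputable def rep (G : Type*) {S T : Type*} [Group G] [MulAction G S] [MulAction G T]
    (x : S × T) : S × T :=
  (Quotient.mk (MulAction.orbitRel G (S × T)) x).out

lemma rep_smul (g : G) (x : S × T) : rep G (g • x) = rep G x := by
  unfold rep
  congr 1
  exact Quotient.sound (MulAction.orbitRel_apply.mpr (MulAction.mem_orbit x g))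

lemma exists_cg (x : S × T) : ∃ g : G, g • rep G x = x := by
  have h : rep G x ∈ MulAction.orbit G x := by
    have h := Quotient.exact (Quotient.out_eq (Quotient.mk (MulAction.orbitRel G (S × T)) x))
    exact MulAction.orbitRel_apply.mp h
  obtain ⟨g, hg⟩ := h
  exact ⟨g⁻¹, by rw [← hg]; simp⟩

/-- A group element carrying the orbit representative to `x`. -/
noncomputable def cG (G : Type*) {S T : Type*} [Group G] [MulAction G S] [MulAction G T]
    (x : S × T) : G :=
  (exists_cg (G := G) x).choose

lemma cG_smul_rep (x : S × T) : cG G x • rep G x = x :=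
  (exists_cg (G := G) x).choose_spec

/-- The matrix coefficient of `f`. -/
noncomputable def coeffA (f : (S →₀ ℤ) →+ (T →₀ ℤ)) (x : S × T) : ℤ :=
  f (Finsupp.single x.1 1) x.2

/-- The chain-homotopy-like map. -/
noncomputable def Hmap (f : (S →₀ ℤ) →+ (T →₀ ℤ)) (g : G) : (S →₀ ℤ) →+ (T →₀ ℤ) :=
  Finsupp.liftAddHom fun s => (zmultiplesHom (T →₀ ℤ))
    (Finsupp.mapDomain (fun t' => g⁻¹ • t')
      ((f (Finsupp.single (g • s) 1)).filter (fun t' => cG G (g • s, t') = g)))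

lemma Hmap_single_apply (f : (S →₀ ℤ) →+ (T →₀ ℤ)) (g : G) (s : S) (t : T) :
    Hmap f g (Finsupp.single s 1) t =
      if cG G (g • s, g • t) = g then coeffA f (g • (s, t)) else 0 := by
  rw [Hmap, Finsupp.liftAddHom_apply_single]
  have h1 : (zmultiplesHom (T →₀ ℤ))
      (Finsupp.mapDomain (fun t' => g⁻¹ • t')
        ((f (Finsupp.single (g • s) 1)).filter (fun t' => cG G (g • s, t') = g))) (1 : ℤ)
      = Finsupp.mapDomain (fun t' => g⁻¹ • t')
        ((f (Finsupp.single (g • s) 1)).filter (fun t' => cG G (g • s, t') = g)) := by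
    simp
  rw [h1]
  have ht : t = g⁻¹ • (g • t) := by simp
  conv_lhs => rw [ht]
  rw [Finsupp.mapDomain_apply (MulAction.injective g⁻¹)]
  rw [Finsupp.filter_apply]
  simp [coeffA]

end Helpers

/-- Ĥ⁻¹(G, Hom(ℤ[S], ℤ[T])) = 0: any additive map `f : ℤ[S] → ℤ[T]` with
`∑_{g ∈ G} g • f = 0` lies in the subgroup generated by the elements `g • h - h`. -/
theorem stmt1 {G S T : Type*} [Group G] [Fintype G] [MulAction G S] [MulAction G T]
    (f : (S →₀ ℤ) →+ (T →₀ ℤ))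
    (hf : (∑ g : G, homAct g f) = 0) :
    f ∈ AddSubgroup.closure
      {x : (S →₀ ℤ) →+ (T →₀ ℤ) |
        ∃ (g : G) (h : (S →₀ ℤ) →+ (T →₀ ℤ)), x = homAct g h - h} := by
  classical
  -- the norm condition on matrix coefficients
  have normA : ∀ x : S × T, ∑ g : G, coeffA f (g⁻¹ • x) = 0 := by
    intro x
    have h1 := congrArg (fun F : (S →₀ ℤ) →+ (T →₀ ℤ) => F (Finsupp.single x.1 1) x.2) hf
    simp only [AddMonoidHom.finset_sum_apply, Finsupp.finset_sum_apply,
      AddMonoidHom.zero_apply, Finsupp.coe_zero, Pi.zero_apply] at h1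
    rw [← h1]
    apply Finset.sum_congr rfl
    intro g _
    rw [homAct_single_apply]
    rfl
  -- sum of coefficients over each orbit vanishes
  have orbitSum : ∀ x : S × T,
      ∑ y ∈ Finset.image (fun g : G => g • x) Finset.univ, coeffA f y = 0 := by
    intro x
    have h1 : ∑ g : G, coeffA f (g • x) = 0 := by
      rw [← normA x]
      exact (Fintype.sum_equiv (Equiv.inv G) _ _ (fun g => rfl)).symm
    have h2 := Finset.sum_fiberwise_of_maps_to
      (s := (Finset.univ : Finset G)) (g := fun g : G => g • x)
      (t := Finset.image (fun g : G => g • x) Finset.univ)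
      (fun g _ => Finset.mem_image.mpr ⟨g, Finset.mem_univ g, rfl⟩)
      (fun g => coeffA f (g • x))
    set n := (Finset.univ.filter fun g : G => g • x = x).card with hn
    have hcard : ∀ y ∈ Finset.image (fun g : G => g • x) Finset.univ,
        (Finset.univ.filter fun g : G => g • x = y).card = n := by
      intro y hy
      obtain ⟨g0, _, hg0⟩ := Finset.mem_image.mp hy
      rw [hn]
      apply Finset.card_bij' (fun g _ => g0⁻¹ * g) (fun g _ => g0 * g)
      · intro a ha
        simp only [Finset.mem_filter, Finset.mem_univ, true_and] at ha ⊢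
        rw [mul_smul, ha, ← hg0]; simp
      · intro a ha
        simp only [Finset.mem_filter, Finset.mem_univ, true_and] at ha ⊢
        rw [mul_smul, ha, hg0]
      · intro a _; simp
      · intro a _; simp
    have h3 : ∑ y ∈ Finset.image (fun g : G => g • x) Finset.univ,
        n • coeffA f y = 0 := by
      rw [← h1, ← h2]
      apply Finset.sum_congr rfl
      intro y hy
      rw [Finset.sum_congr rfl (fun g hg => by
        rw [(Finset.mem_filter.mp hg).2] : ∀ g ∈ Finset.univ.filter fun g : G => g • x = y,
          coeffA f (g • x) = coeffA f y)]
      rw [Finset.sum_const, hcard y hy]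
    rw [← Finset.smul_sum] at h3
    have hn0 : n ≠ 0 := by
      rw [hn]
      apply Finset.card_ne_zero_of_mem (a := (1 : G))
      simp
    have := h3
    rw [nsmul_eq_mul] at this
    exact (mul_eq_zero.mp this).resolve_left (by exact_mod_cast hn0)
  -- the key combinatorial vanishing
  have claim2 : ∀ x : S × T,
      ∑ g : G, (if cG G (g • x) = g then coeffA f (g • x) else 0) = 0 := by
    intro x
    by_cases hx : rep G x = x
    · rw [← Finset.sum_filter]
      rw [← orbitSum x]
      apply Finset.sum_bij (fun (g : G) _ => g • x)
      · intro g hg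
        exact Finset.mem_image.mpr ⟨g, Finset.mem_univ g, rfl⟩
      · intro g1 h1 g2 h2 he
        simp only [Finset.mem_filter, Finset.mem_univ, true_and] at h1 h2
        rw [← h1, ← h2, he]
      · intro y hy
        obtain ⟨g0, _, hg0⟩ := Finset.mem_image.mp hy
        refine ⟨cG G y, ?_, ?_⟩
        · have hrepy : rep G y = x := by rw [← hg0, rep_smul, hx]
          have : cG G y • x = y := by rw [← hrepy] at hx ⊢; exact cG_smul_rep y
          simp only [Finset.mem_filter, Finset.mem_univ, true_and]
          rw [this]
        · have hrepy : rep G y = x := by rw [← hg0, rep_smul, hx]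
          rw [← hrepy]; exact (cG_smul_rep y)
      · intro g _; rfl
    · apply Finset.sum_eq_zero
      intro g _
      rw [if_neg]
      intro hc
      apply hx
      have := cG_smul_rep (G := G) (g • x)
      rw [hc, rep_smul] at this
      exact MulAction.injective g this
  -- the key identity: f is the sum of the twisted differences
  have key : f = ∑ g : G, (homAct g (Hmap f g) - Hmap f g) := by
    have base : ∀ (s : S),
        f (Finsupp.single s 1) =
          (∑ g : G, (homAct g (Hmap f g) - Hmap f g)) (Finsupp.single s 1) := by
      intro s
      ext t
      rw [AddMonoidHom.finset_sum_apply, Finsupp.finset_sum_apply]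
      have hterm : ∀ g : G,
          (homAct g (Hmap f g) - Hmap f g) (Finsupp.single s 1) t =
            (if cG G (s, t) = g then coeffA f (s, t) else 0) -
            (if cG G (g • (s, t)) = g then coeffA f (g • (s, t)) else 0) := by
        intro g
        rw [AddMonoidHom.sub_apply, Finsupp.sub_apply]
        congr 1
        · rw [homAct_single_apply, Hmap_single_apply]
          simp [Prod.smul_def, smul_inv_smul]
        · rw [Hmap_single_apply]
          rfl
      rw [Finset.sum_congr rfl (fun g _ => hterm g)]
      rw [Finset.sum_sub_distrib]
      rw [claim2 (s, t)]
      rw [Finset.sum_ite_eq Finset.univ (cG G (s, t))]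
      simp [coeffA]
    apply Finsupp.addHom_ext
    intro s n
    have h1 : (Finsupp.single s n : S →₀ ℤ) = n • Finsupp.single s 1 := by
      rw [Finsupp.smul_single]; norm_num
    rw [h1, map_zsmul, map_zsmul, base]
  rw [key]
  exact AddSubgroup.sum_mem _ fun g _ =>
    AddSubgroup.subset_closure ⟨g, Hmap f g, rfl⟩
end

section
/- Let G be a finite group and let A and B be G-modules. Let a : G × G → A be a 2-cocycle of G in A, and let b ∈ B satisfy Σ_{σ∈G} σ•b = 0. Define c, d : G → A ⊗ B (tensor product over ℤ, with diagonal G-action) by c(σ) = Σ_{τ∈G} a(σ,τ) ⊗ (στ)•b and d(σ) = Σ_{τ∈G} (τ⁻¹•a(τ,σ)) ⊗ (τ⁻¹•b). Then c and d are 1-cocycles of G in A ⊗ B, and c − d is a 1-coboundary of G in A ⊗ B; in particular c and d are cohomologous (both represent the Tate cup product of the class of a in H²(G,A) with the class of b in Ĥ^{-1}(G,B)). -/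
open TensorProduct

/-- The diagonal action of `g : G` on `A ⊗[ℤ] B`. -/
noncomputable def tensorAct {G A B : Type*} [Group G]
    [AddCommGroup A] [AddCommGroup B] [DistribMulAction G A] [DistribMulAction G B]
    (g : G) : A ⊗[ℤ] B →ₗ[ℤ] A ⊗[ℤ] B :=
  TensorProduct.map (DistribMulAction.toAddMonoidHom A g).toIntLinearMap
    (DistribMulAction.toAddMonoidHom B g).toIntLinearMap

/-- Lemma "cup": explicit `1`-cocycles `c` and `d` representing the Tate cup product
`α ⌣ β` for `α ∈ H²(G,A)` and `β ∈ Ĥ⁻¹(G,B)`, and the fact that they are cohomologous. -/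
theorem stmt6 {G A B : Type*} [Group G] [Fintype G]
    [AddCommGroup A] [AddCommGroup B] [DistribMulAction G A] [DistribMulAction G B]
    (a : G → G → A)
    (ha : ∀ σ τ υ : G, σ • a τ υ - a (σ * τ) υ + a σ (τ * υ) - a σ τ = 0)
    (b : B) (hb : (∑ σ : G, σ • b) = 0)
    (c d : G → A ⊗[ℤ] B)
    (hc : ∀ σ : G, c σ = ∑ τ : G, a σ τ ⊗ₜ[ℤ] ((σ * τ) • b))
    (hd : ∀ σ : G, d σ = ∑ τ : G, (τ⁻¹ • a τ σ) ⊗ₜ[ℤ] (τ⁻¹ • b)) :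
    (∀ σ τ : G, c (σ * τ) = c σ + tensorAct σ (c τ)) ∧
    (∀ σ τ : G, d (σ * τ) = d σ + tensorAct σ (d τ)) ∧
    (∃ m : A ⊗[ℤ] B, ∀ σ : G, c σ - d σ = tensorAct σ m - m) := by
  have act_tmul : ∀ (g : G) (x : A) (y : B),
      tensorAct (A := A) (B := B) g (x ⊗ₜ[ℤ] y) = (g • x) ⊗ₜ[ℤ] (g • y) := by
    intro g x y; rfl
  have reindex : ∀ (e : G → G), Function.Bijective e → ∀ (f : G → A ⊗[ℤ] B),
      (∑ τ : G, f (e τ)) = ∑ τ : G, f τ := fun e he f =>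
    Fintype.sum_bijective e he (fun τ => f (e τ)) f (fun τ => rfl)
  have sumb : ∀ g : G, (∑ τ : G, (g * τ) • b) = 0 := by
    intro g
    have := Fintype.sum_bijective (fun τ : G => g * τ) (Group.mulLeft_bijective g)
      (fun τ : G => (g * τ) • b) (fun τ : G => τ • b) (fun τ => rfl)
    rw [this, hb]
  have sumbinv : (∑ τ : G, τ⁻¹ • b) = 0 := by
    have := Fintype.sum_bijective (fun τ : G => τ⁻¹) inv_involutive.bijective
      (fun τ : G => τ⁻¹ • b) (fun τ : G => τ • b) (fun τ => rfl)
    rw [this, hb]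
  refine ⟨?_, ?_, ?_⟩
  · -- c is a cocycle
    intro σ τ
    rw [hc, hc, hc, map_sum]
    have step : ∀ υ : G, a (σ * τ) υ ⊗ₜ[ℤ] (((σ * τ) * υ) • b)
        = (σ • a τ υ) ⊗ₜ[ℤ] ((σ * (τ * υ)) • b)
          + a σ (τ * υ) ⊗ₜ[ℤ] ((σ * (τ * υ)) • b)
          - a σ τ ⊗ₜ[ℤ] (((σ * τ) * υ) • b) := by
      intro υ
      have h := ha σ τ υ
      have h2 : a (σ * τ) υ = σ • a τ υ + a σ (τ * υ) - a σ τ := by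
        rw [← sub_eq_zero]
        calc a (σ * τ) υ - (σ • a τ υ + a σ (τ * υ) - a σ τ)
            = -(σ • a τ υ - a (σ * τ) υ + a σ (τ * υ) - a σ τ) := by abel
          _ = 0 := by rw [h, neg_zero]
      rw [h2, sub_tmul, add_tmul, mul_assoc]
    calc ∑ υ : G, a (σ * τ) υ ⊗ₜ[ℤ] (((σ * τ) * υ) • b)
        = ∑ υ : G, ((σ • a τ υ) ⊗ₜ[ℤ] ((σ * (τ * υ)) • b)
            + a σ (τ * υ) ⊗ₜ[ℤ] ((σ * (τ * υ)) • b)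
            - a σ τ ⊗ₜ[ℤ] (((σ * τ) * υ) • b)) :=
          Finset.sum_congr rfl fun υ _ => step υ
      _ = (∑ υ : G, (σ • a τ υ) ⊗ₜ[ℤ] ((σ * (τ * υ)) • b))
            + (∑ υ : G, a σ (τ * υ) ⊗ₜ[ℤ] ((σ * (τ * υ)) • b))
            - ∑ υ : G, a σ τ ⊗ₜ[ℤ] (((σ * τ) * υ) • b) := by
          rw [Finset.sum_sub_distrib, Finset.sum_add_distrib]
      _ = (∑ υ : G, (σ • a τ υ) ⊗ₜ[ℤ] ((σ * (τ * υ)) • b))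
            + (∑ υ : G, a σ υ ⊗ₜ[ℤ] ((σ * υ) • b)) - 0 := by
          rw [← TensorProduct.tmul_sum, sumb (σ * τ), tmul_zero,
            reindex (fun υ => τ * υ) (Group.mulLeft_bijective τ)
              (fun ρ => a σ ρ ⊗ₜ[ℤ] ((σ * ρ) • b))]
      _ = (∑ υ : G, a σ υ ⊗ₜ[ℤ] ((σ * υ) • b))
            + ∑ υ : G, tensorAct σ (a τ υ ⊗ₜ[ℤ] ((τ * υ) • b)) := by
          rw [sub_zero, add_comm]
          congr 1
          refine Finset.sum_congr rfl fun υ _ => ?_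
          rw [act_tmul, ← mul_smul]
  · -- d is a cocycle
    intro σ τ
    rw [hd, hd, hd, map_sum]
    have step : ∀ ρ : G, (ρ⁻¹ • a ρ (σ * τ)) ⊗ₜ[ℤ] (ρ⁻¹ • b)
        = (ρ⁻¹ • a (ρ * σ) τ) ⊗ₜ[ℤ] (ρ⁻¹ • b)
          + (ρ⁻¹ • a ρ σ) ⊗ₜ[ℤ] (ρ⁻¹ • b)
          - a σ τ ⊗ₜ[ℤ] (ρ⁻¹ • b) := by
      intro ρ
      have h := ha ρ σ τ
      have h2 : a ρ (σ * τ) = a (ρ * σ) τ + a ρ σ - ρ • a σ τ := by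
        rw [← sub_eq_zero]
        calc a ρ (σ * τ) - (a (ρ * σ) τ + a ρ σ - ρ • a σ τ)
            = ρ • a σ τ - a (ρ * σ) τ + a ρ (σ * τ) - a ρ σ := by abel
          _ = 0 := h
      rw [h2, smul_sub, smul_add, inv_smul_smul, sub_tmul, add_tmul]
    calc ∑ ρ : G, (ρ⁻¹ • a ρ (σ * τ)) ⊗ₜ[ℤ] (ρ⁻¹ • b)
        = ∑ ρ : G, ((ρ⁻¹ • a (ρ * σ) τ) ⊗ₜ[ℤ] (ρ⁻¹ • b)
            + (ρ⁻¹ • a ρ σ) ⊗ₜ[ℤ] (ρ⁻¹ • b)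
            - a σ τ ⊗ₜ[ℤ] (ρ⁻¹ • b)) := Finset.sum_congr rfl fun ρ _ => step ρ
      _ = (∑ ρ : G, (ρ⁻¹ • a (ρ * σ) τ) ⊗ₜ[ℤ] (ρ⁻¹ • b))
            + (∑ ρ : G, (ρ⁻¹ • a ρ σ) ⊗ₜ[ℤ] (ρ⁻¹ • b))
            - ∑ ρ : G, a σ τ ⊗ₜ[ℤ] (ρ⁻¹ • b) := by
          rw [Finset.sum_sub_distrib, Finset.sum_add_distrib]
      _ = (∑ ρ : G, (ρ⁻¹ • a ρ σ) ⊗ₜ[ℤ] (ρ⁻¹ • b))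
            + ∑ ρ : G, tensorAct σ ((ρ⁻¹ • a ρ τ) ⊗ₜ[ℤ] (ρ⁻¹ • b)) := by
          rw [← TensorProduct.tmul_sum, sumbinv, tmul_zero, sub_zero, add_comm]
          congr 1
          have : ∀ ρ : G, tensorAct (A := A) (B := B) σ ((ρ⁻¹ • a ρ τ) ⊗ₜ[ℤ] (ρ⁻¹ • b))
              = ((σ * ρ⁻¹) • a ρ τ) ⊗ₜ[ℤ] ((σ * ρ⁻¹) • b) := by
            intro ρ; rw [act_tmul, ← mul_smul, ← mul_smul]
          rw [Finset.sum_congr rfl (fun ρ _ => this ρ)]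
          symm
          have := reindex (fun υ => υ * σ) (Group.mulRight_bijective σ)
            (fun ρ => ((σ * ρ⁻¹) • a ρ τ) ⊗ₜ[ℤ] ((σ * ρ⁻¹) • b))
          rw [← this]
          refine Finset.sum_congr rfl fun υ _ => ?_
          have he : σ * (υ * σ)⁻¹ = υ⁻¹ := by
            rw [mul_inv_rev, mul_inv_cancel_left]
          rw [he]
  · -- coboundary
    refine ⟨∑ υ : G, a υ υ⁻¹ ⊗ₜ[ℤ] (υ • b), fun σ => ?_⟩
    rw [hc, hd, map_sum]
    have hcs : (∑ τ : G, a σ τ ⊗ₜ[ℤ] ((σ * τ) • b))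
        = ∑ ρ : G, a σ (σ⁻¹ * ρ) ⊗ₜ[ℤ] (ρ • b) := by
      rw [← reindex (fun ρ => σ * ρ) (Group.mulLeft_bijective σ)
        (fun ρ => a σ (σ⁻¹ * ρ) ⊗ₜ[ℤ] (ρ • b))]
      refine Finset.sum_congr rfl fun τ _ => ?_
      rw [inv_mul_cancel_left]
    have hds : (∑ τ : G, (τ⁻¹ • a τ σ) ⊗ₜ[ℤ] (τ⁻¹ • b))
        = ∑ ρ : G, (ρ • a ρ⁻¹ σ) ⊗ₜ[ℤ] (ρ • b) := by
      rw [← reindex (fun ρ => ρ⁻¹) inv_involutive.bijective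
        (fun ρ => (ρ • a ρ⁻¹ σ) ⊗ₜ[ℤ] (ρ • b))]
      refine Finset.sum_congr rfl fun τ _ => ?_
      rw [inv_inv]
    have hms : (∑ υ : G, tensorAct σ (a υ υ⁻¹ ⊗ₜ[ℤ] (υ • b)))
        = ∑ ρ : G, (σ • a (σ⁻¹ * ρ) (ρ⁻¹ * σ)) ⊗ₜ[ℤ] (ρ • b) := by
      rw [← reindex (fun ρ => σ * ρ) (Group.mulLeft_bijective σ)
        (fun ρ => (σ • a (σ⁻¹ * ρ) (ρ⁻¹ * σ)) ⊗ₜ[ℤ] (ρ • b))]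
      refine Finset.sum_congr rfl fun ρ _ => ?_
      rw [inv_mul_cancel_left, mul_inv_rev, inv_mul_cancel_right, act_tmul, mul_smul]
    rw [hcs, hds, hms]
    rw [sub_eq_sub_iff_add_eq_add, ← Finset.sum_add_distrib, ← Finset.sum_add_distrib]
    have key : ∀ ρ : G, a σ (σ⁻¹ * ρ) + a ρ ρ⁻¹
        = (σ • a (σ⁻¹ * ρ) (ρ⁻¹ * σ) + ρ • a ρ⁻¹ σ) + (a σ 1 - a 1 σ) := by
      intro ρ
      have h1 : ρ • a ρ⁻¹ σ - a 1 σ + a ρ (ρ⁻¹ * σ) - a ρ ρ⁻¹ = 0 := by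
        have := ha ρ ρ⁻¹ σ
        rwa [mul_inv_cancel] at this
      have h2 : σ • a (σ⁻¹ * ρ) (ρ⁻¹ * σ) - a ρ (ρ⁻¹ * σ) + a σ 1 - a σ (σ⁻¹ * ρ) = 0 := by
        have := ha σ (σ⁻¹ * ρ) (ρ⁻¹ * σ)
        rwa [mul_inv_cancel_left, show (σ⁻¹ * ρ) * (ρ⁻¹ * σ) = 1 by group] at this
      rw [← sub_eq_zero]
      calc a σ (σ⁻¹ * ρ) + a ρ ρ⁻¹
            - ((σ • a (σ⁻¹ * ρ) (ρ⁻¹ * σ) + ρ • a ρ⁻¹ σ) + (a σ 1 - a 1 σ))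
          = -((ρ • a ρ⁻¹ σ - a 1 σ + a ρ (ρ⁻¹ * σ) - a ρ ρ⁻¹)
              + (σ • a (σ⁻¹ * ρ) (ρ⁻¹ * σ) - a ρ (ρ⁻¹ * σ) + a σ 1 - a σ (σ⁻¹ * ρ))) := by
            abel
        _ = 0 := by rw [h1, h2, add_zero, neg_zero]
    calc ∑ ρ : G, (a σ (σ⁻¹ * ρ) ⊗ₜ[ℤ] (ρ • b) + a ρ ρ⁻¹ ⊗ₜ[ℤ] (ρ • b))
        = ∑ ρ : G, ((σ • a (σ⁻¹ * ρ) (ρ⁻¹ * σ)) ⊗ₜ[ℤ] (ρ • b)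
            + (ρ • a ρ⁻¹ σ) ⊗ₜ[ℤ] (ρ • b) + (a σ 1 - a 1 σ) ⊗ₜ[ℤ] (ρ • b)) := by
          refine Finset.sum_congr rfl fun ρ _ => ?_
          rw [← add_tmul, ← add_tmul, ← add_tmul, key ρ]
      _ = (∑ ρ : G, ((σ • a (σ⁻¹ * ρ) (ρ⁻¹ * σ)) ⊗ₜ[ℤ] (ρ • b)
            + (ρ • a ρ⁻¹ σ) ⊗ₜ[ℤ] (ρ • b)))
            + ∑ ρ : G, (a σ 1 - a 1 σ) ⊗ₜ[ℤ] (ρ • b) := Finset.sum_add_distrib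
      _ = ∑ ρ : G, ((σ • a (σ⁻¹ * ρ) (ρ⁻¹ * σ)) ⊗ₜ[ℤ] (ρ • b)
            + (ρ • a ρ⁻¹ σ) ⊗ₜ[ℤ] (ρ • b)) := by
          rw [← TensorProduct.tmul_sum, hb, tmul_zero, add_zero]
end

section
/- Let G be a finite group and let A and M be G-modules. Let a : G × G → A be a 2-cocycle of G in A, and let μ : A → M be an additive map such that Σ_{τ∈G} τ•μ = 0, where the G-action on additive maps is (τ•μ)(x) = τ•μ(τ⁻¹•x). Define c, d : G → M by c(σ) = Σ_{τ∈G} (στ)•μ((στ)⁻¹•a(σ,τ)) and d(σ) = Σ_{τ∈G} τ⁻¹•μ(a(τ,σ)). Then c and d are 1-cocycles of G in M and c − d is a 1-coboundary of G in M; in particular the explicit corestriction cocycle d represents the cup product of the class of a in H²(G,A) with the class of μ in Ĥ^{-1}(G, Hom(A,M)). -/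
/-- Lemma "CorCup": for a `2`-cocycle `a` of `G` in `A` and `μ : A → M` additive with
`∑_τ τ • μ = 0` (for the action `(τ • μ)(x) = τ • μ(τ⁻¹ • x)`), the functions
`c(σ) = ∑_τ (στ) • μ((στ)⁻¹ • a(σ,τ))` and `d(σ) = ∑_τ τ⁻¹ • μ(a(τ,σ))` are
`1`-cocycles of `G` in `M`, and `c − d` is a `1`-coboundary. -/
theorem stmt7 {G A M : Type*} [Group G] [Fintype G]
    [AddCommGroup A] [AddCommGroup M] [DistribMulAction G A] [DistribMulAction G M]
    (a : G → G → A)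
    (ha : ∀ σ τ υ : G, σ • a τ υ - a (σ * τ) υ + a σ (τ * υ) - a σ τ = 0)
    (μ : A →+ M) (hμ : ∀ x : A, (∑ τ : G, τ • μ (τ⁻¹ • x)) = 0)
    (c d : G → M)
    (hc : ∀ σ : G, c σ = ∑ τ : G, (σ * τ) • μ ((σ * τ)⁻¹ • a σ τ))
    (hd : ∀ σ : G, d σ = ∑ τ : G, τ⁻¹ • μ (a τ σ)) :
    (∀ σ τ : G, c (σ * τ) = c σ + σ • c τ) ∧
    (∀ σ τ : G, d (σ * τ) = d σ + σ • d τ) ∧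
    (∃ m : M, ∀ σ : G, c σ - d σ = σ • m - m) := by
  have key : ∀ σ τ υ : G, a (σ * τ) υ = σ • a τ υ + a σ (τ * υ) - a σ τ := by
    intro σ τ υ
    have h := ha σ τ υ
    have h2 : σ • a τ υ + a σ (τ * υ) - a σ τ - a (σ * τ) υ = 0 := by
      rw [← h]; abel
    exact (sub_eq_zero.mp h2).symm
  have hμ' : ∀ x : A, (∑ τ : G, τ⁻¹ • μ (τ • x)) = 0 := by
    intro x
    rw [← hμ x]
    exact Fintype.sum_equiv (Equiv.inv G) _ _ (fun τ => by simp)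
  -- c is a cocycle
  have hccoc : ∀ σ τ : G, c (σ * τ) = c σ + σ • c τ := by
    intro σ τ
    have step : ∀ υ : G, (σ * τ * υ) • μ ((σ * τ * υ)⁻¹ • a (σ * τ) υ)
        = (σ * (τ * υ)) • μ ((σ * (τ * υ))⁻¹ • a σ (τ * υ))
          + σ • ((τ * υ) • μ ((τ * υ)⁻¹ • a τ υ))
          - (σ * τ * υ) • μ ((σ * τ * υ)⁻¹ • a σ τ) := by
      intro υ
      have e1 : (σ * τ * υ)⁻¹ • σ • a τ υ = (τ * υ)⁻¹ • a τ υ := by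
        rw [smul_smul]; congr 1; group
      rw [key σ τ υ, smul_sub, smul_add, map_sub, map_add, smul_sub, smul_add, e1,
        mul_assoc σ τ υ, mul_smul σ (τ * υ) (μ ((τ * υ)⁻¹ • a τ υ))]
      abel
    rw [hc (σ * τ), hc σ, hc τ]
    calc (∑ υ : G, (σ * τ * υ) • μ ((σ * τ * υ)⁻¹ • a (σ * τ) υ))
        = ∑ υ : G, ((σ * (τ * υ)) • μ ((σ * (τ * υ))⁻¹ • a σ (τ * υ))
            + σ • ((τ * υ) • μ ((τ * υ)⁻¹ • a τ υ))
            - (σ * τ * υ) • μ ((σ * τ * υ)⁻¹ • a σ τ)) :=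
          Finset.sum_congr rfl (fun υ _ => step υ)
      _ = (∑ υ : G, (σ * (τ * υ)) • μ ((σ * (τ * υ))⁻¹ • a σ (τ * υ)))
            + (∑ υ : G, σ • ((τ * υ) • μ ((τ * υ)⁻¹ • a τ υ)))
            - ∑ υ : G, (σ * τ * υ) • μ ((σ * τ * υ)⁻¹ • a σ τ) := by
          rw [Finset.sum_sub_distrib, Finset.sum_add_distrib]
      _ = (∑ π : G, (σ * π) • μ ((σ * π)⁻¹ • a σ π))
            + σ • (∑ υ : G, (τ * υ) • μ ((τ * υ)⁻¹ • a τ υ)) - 0 := by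
          congr 1
          congr 1
          · exact Fintype.sum_equiv (Equiv.mulLeft τ) _ _ (fun υ => by simp)
          · rw [Finset.smul_sum]
          · rw [← hμ (a σ τ)]
            exact Fintype.sum_equiv (Equiv.mulLeft (σ * τ)) _ _ (fun υ => by simp [mul_assoc])
      _ = (∑ π : G, (σ * π) • μ ((σ * π)⁻¹ • a σ π))
            + σ • ∑ υ : G, (τ * υ) • μ ((τ * υ)⁻¹ • a τ υ) := by abel
  -- d is a cocycle
  have hdcoc : ∀ σ τ : G, d (σ * τ) = d σ + σ • d τ := by
    intro σ τ
    have step : ∀ ρ : G, ρ⁻¹ • μ (a ρ (σ * τ))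
        = ρ⁻¹ • μ (a (ρ * σ) τ) + ρ⁻¹ • μ (a ρ σ) - ρ⁻¹ • μ (ρ • a σ τ) := by
      intro ρ
      have h : a ρ (σ * τ) = a (ρ * σ) τ + a ρ σ - ρ • a σ τ := by
        rw [key ρ σ τ]; abel
      rw [h, map_sub, map_add, smul_sub, smul_add]
    rw [hd (σ * τ), hd σ, hd τ]
    calc (∑ ρ : G, ρ⁻¹ • μ (a ρ (σ * τ)))
        = ∑ ρ : G, (ρ⁻¹ • μ (a (ρ * σ) τ) + ρ⁻¹ • μ (a ρ σ) - ρ⁻¹ • μ (ρ • a σ τ)) :=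
          Finset.sum_congr rfl (fun ρ _ => step ρ)
      _ = (∑ ρ : G, ρ⁻¹ • μ (a (ρ * σ) τ)) + (∑ ρ : G, ρ⁻¹ • μ (a ρ σ))
            - ∑ ρ : G, ρ⁻¹ • μ (ρ • a σ τ) := by
          rw [Finset.sum_sub_distrib, Finset.sum_add_distrib]
      _ = σ • (∑ π : G, π⁻¹ • μ (a π τ)) + (∑ ρ : G, ρ⁻¹ • μ (a ρ σ)) - 0 := by
          congr 1
          congr 1
          · rw [Finset.smul_sum]
            exact Fintype.sum_equiv (Equiv.mulRight σ) _ _ (fun ρ => by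
              simp [smul_smul, mul_inv_rev])
          · exact hμ' (a σ τ)
      _ = (∑ ρ : G, ρ⁻¹ • μ (a ρ σ)) + σ • ∑ π : G, π⁻¹ • μ (a π τ) := by abel
  refine ⟨hccoc, hdcoc, ⟨∑ τ : G, τ • μ (a τ⁻¹ τ), fun σ => ?_⟩⟩
  have step : ∀ τ : G, (σ * τ) • μ ((σ * τ)⁻¹ • a σ τ)
      = σ • (τ • μ (a τ⁻¹ τ)) - (σ * τ) • μ (a (σ * τ)⁻¹ (σ * τ))
        + (σ * τ) • μ (a (σ * τ)⁻¹ σ) := by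
    intro τ
    have h := ha (σ * τ)⁻¹ σ τ
    have e : (σ * τ)⁻¹ * σ = τ⁻¹ := by group
    rw [e] at h
    have h2 : (σ * τ)⁻¹ • a σ τ = a τ⁻¹ τ - a (σ * τ)⁻¹ (σ * τ) + a (σ * τ)⁻¹ σ := by
      have h3 : (σ * τ)⁻¹ • a σ τ - (a τ⁻¹ τ - a (σ * τ)⁻¹ (σ * τ) + a (σ * τ)⁻¹ σ) = 0 := by
        rw [← h]; abel
      exact sub_eq_zero.mp h3
    rw [h2, map_add, map_sub, smul_add, smul_sub, mul_smul σ τ (μ (a τ⁻¹ τ))]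
  rw [hc σ, hd σ]
  calc (∑ τ : G, (σ * τ) • μ ((σ * τ)⁻¹ • a σ τ)) - ∑ τ : G, τ⁻¹ • μ (a τ σ)
      = ((∑ τ : G, σ • (τ • μ (a τ⁻¹ τ))) - (∑ τ : G, (σ * τ) • μ (a (σ * τ)⁻¹ (σ * τ)))
          + ∑ τ : G, (σ * τ) • μ (a (σ * τ)⁻¹ σ)) - ∑ τ : G, τ⁻¹ • μ (a τ σ) := by
        congr 1
        rw [← Finset.sum_sub_distrib, ← Finset.sum_add_distrib]
        exact Finset.sum_congr rfl (fun τ _ => step τ)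
    _ = (σ • (∑ τ : G, τ • μ (a τ⁻¹ τ)) - (∑ τ : G, τ • μ (a τ⁻¹ τ))
          + ∑ τ : G, τ⁻¹ • μ (a τ σ)) - ∑ τ : G, τ⁻¹ • μ (a τ σ) := by
        congr 1
        congr 1
        · congr 1
          · rw [Finset.smul_sum]
          · exact Fintype.sum_equiv (Equiv.mulLeft σ) _ _ (fun τ => by simp)
        · exact Fintype.sum_equiv ((Equiv.mulLeft σ).trans (Equiv.inv G)) _ _
            (fun τ => by simp)
    _ = σ • (∑ τ : G, τ • μ (a τ⁻¹ τ)) - ∑ τ : G, τ • μ (a τ⁻¹ τ) := by abel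
end

section
/- Consider an extension of groups 1 → A → E →π G → 1 with A abelian and G finite; let G act on A by conjugation in E (written σ•a), fix a set-theoretic section s : G → E of π with s(1) = 1, and let α : G × G → A be defined by s(σ)s(τ) = α(σ,τ)·s(στ). Let M be a G-module, regarded as an E-module via π (so A acts trivially on M), and let μ : A → M be an additive map. Define b : E → M by b(a·s(σ)) := Σ_{τ∈G} τ⁻¹•( μ(τ•a) + μ(α(τ,σ)) ) for a ∈ A, σ ∈ G (every element of E is uniquely of this form). Then b is a 1-cocycle of E in M, and its restriction to A is the additive map a ↦ Σ_{τ∈G} τ⁻¹•μ(τ•a), i.e. the norm N_G(μ) of μ for the G-action (τ•μ)(x) = τ•μ(τ⁻¹•x) on Hom(A,M). (This cocycle represents the corestriction from H¹(A,M) = Hom(A,M) to H¹(E,M) of μ.) -/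
/-- Conjugation of `a ∈ A = ker π` by `s τ`, giving the `G`-action on `A`. -/
def conjKer {E G : Type*} [Group E] [Group G] (π : E →* G) (s : G → E)
    (τ : G) (a : ↥π.ker) : ↥π.ker :=
  ⟨s τ * (a : E) * (s τ)⁻¹, by
    have h := a.2
    rw [MonoidHom.mem_ker] at h ⊢
    simp [h]⟩

/-- The `A`-component of `w ∈ E` in the decomposition `w = a · s(π w)`. -/
def kerPart {E G : Type*} [Group E] [Group G] (π : E →* G) (s : G → E)
    (hs : ∀ σ, π (s σ) = σ) (w : E) : ↥π.ker :=
  ⟨w * (s (π w))⁻¹, by rw [MonoidHom.mem_ker]; simp [hs]⟩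

/-- The explicit corestriction cocycle
`b(a·s(σ)) = ∑_{τ ∈ G} τ⁻¹ • (μ(τ•a) + μ(α(τ,σ)))` of `E` in `M`. -/
noncomputable def coresCocycle {E G M : Type*} [Group E] [Group G] [Fintype G]
    [AddCommGroup M] [DistribMulAction G M]
    (π : E →* G) (s : G → E) (hs : ∀ σ, π (s σ) = σ)
    (α : G → G → ↥π.ker) (μ : ↥π.ker → M) : E → M :=
  fun w => ∑ τ : G, τ⁻¹ • (μ (conjKer π s τ (kerPart π s hs w)) + μ (α τ (π w)))

/-- The explicit corestriction formula: `b` is a `1`-cocycle of `E` in `M` whose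
restriction to `A` is the norm `N_G(μ)` of `μ`. -/
theorem stmt8 {E G M : Type*} [Group E] [Group G] [Fintype G]
    [AddCommGroup M] [DistribMulAction G M]
    (π : E →* G) (hπ : Function.Surjective π)
    (hab : ∀ a b : ↥π.ker, a * b = b * a)
    (s : G → E) (hs : ∀ σ, π (s σ) = σ) (hs1 : s 1 = 1)
    (α : G → G → ↥π.ker) (hα : ∀ σ τ : G, (α σ τ : E) * s (σ * τ) = s σ * s τ)
    (μ : ↥π.ker → M) (hμ : ∀ a b : ↥π.ker, μ (a * b) = μ a + μ b) :
    (∀ w₁ w₂ : E, coresCocycle π s hs α μ (w₁ * w₂) =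
        coresCocycle π s hs α μ w₁ + π w₁ • coresCocycle π s hs α μ w₂) ∧
    (∀ a : ↥π.ker, coresCocycle π s hs α μ ↑a = ∑ τ : G, τ⁻¹ • μ (conjKer π s τ a)) := by
  -- the "twisted component" g τ w = s τ * w * s(τ · π w)⁻¹ ∈ ker π
  set g : G → E → ↥π.ker := fun τ w =>
    ⟨s τ * w * (s (τ * π w))⁻¹, by rw [MonoidHom.mem_ker]; simp [hs, mul_assoc]⟩ with hg
  have hkey : ∀ (τ : G) (w : E),
      conjKer π s τ (kerPart π s hs w) * α τ (π w) = g τ w := by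
    intro τ w
    apply Subtype.ext
    have hαE : (α τ (π w) : E) = s τ * s (π w) * (s (τ * π w))⁻¹ := by
      rw [← hα τ (π w)]; group
    show (s τ * (w * (s (π w))⁻¹) * (s τ)⁻¹) * (α τ (π w) : E)
        = s τ * w * (s (τ * π w))⁻¹
    rw [hαE]; group
  have hb : ∀ w : E, coresCocycle π s hs α μ w = ∑ τ : G, τ⁻¹ • μ (g τ w) := by
    intro w
    refine Finset.sum_congr rfl fun τ _ => ?_
    rw [← hkey, hμ]
  constructor
  · intro w₁ w₂
    have hgmul : ∀ τ : G, g τ (w₁ * w₂) = g τ w₁ * g (τ * π w₁) w₂ := by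
      intro τ
      apply Subtype.ext
      show s τ * (w₁ * w₂) * (s (τ * π (w₁ * w₂)))⁻¹
          = (s τ * w₁ * (s (τ * π w₁))⁻¹) * (s (τ * π w₁) * w₂ * (s (τ * π w₁ * π w₂))⁻¹)
      rw [map_mul, ← mul_assoc τ (π w₁) (π w₂)]; group
    rw [hb, hb, hb]
    have step1 : ∑ τ : G, τ⁻¹ • μ (g τ (w₁ * w₂))
        = ∑ τ : G, (τ⁻¹ • μ (g τ w₁) + τ⁻¹ • μ (g (τ * π w₁) w₂)) := by
      refine Finset.sum_congr rfl fun τ _ => ?_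
      rw [hgmul, hμ, smul_add]
    rw [step1, Finset.sum_add_distrib]
    congr 1
    rw [Finset.smul_sum]
    refine Fintype.sum_equiv (Equiv.mulRight (π w₁))
      (fun τ => τ⁻¹ • μ (g (τ * π w₁) w₂))
      (fun τ => π w₁ • τ⁻¹ • μ (g τ w₂)) fun τ => ?_
    simp [smul_smul, mul_inv_rev, mul_assoc]
  · intro a
    rw [hb]
    refine Finset.sum_congr rfl fun τ _ => ?_
    have hgA : g τ (a : E) = conjKer π s τ a := by
      apply Subtype.ext
      show s τ * (a : E) * (s (τ * π (a : E)))⁻¹ = s τ * (a : E) * (s τ)⁻¹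
      rw [MonoidHom.mem_ker.mp a.2, mul_one]
    rw [hgA]
end

section
/- Consider an extension of groups 1 → A → E →π G → 1 with A abelian and G finite; let G act on A by conjugation in E, fix a set-theoretic section s : G → E of π with s(1) = 1, and let α : G × G → A be defined by s(σ)s(τ) = α(σ,τ)·s(στ). Let M be a G-module, regarded as an E-module via π, and let μ : A → M be an additive map. Fix g₀ ∈ G and let μ' := g₀•μ − μ, where (τ•μ)(x) = τ•μ(τ⁻¹•x). Then the 1-cocycle b' : E → M defined by b'(a·s(σ)) := Σ_{τ∈G} τ⁻¹•( μ'(τ•a) + μ'(α(τ,σ)) ) is a 1-coboundary of E in M, i.e. there exists m₀ ∈ M with b'(w) = w•m₀ − m₀ for all w ∈ E. (Thus the corestriction H¹(A,M) → H¹(E,M) factors through the G-coinvariants of Hom(A,M).) -/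
/-- Lemma "cNew"/"CorRes(2)": the corestriction cocycle of `μ' = g₀•μ − μ` is a
`1`-coboundary of `E` in `M`; so corestriction factors through the `G`-coinvariants
of `Hom(A,M)`. -/
theorem stmt9 {E G M : Type*} [Group E] [Group G] [Fintype G]
    [AddCommGroup M] [DistribMulAction G M]
    (π : E →* G) (hπ : Function.Surjective π)
    (hab : ∀ a b : ↥π.ker, a * b = b * a)
    (s : G → E) (hs : ∀ σ, π (s σ) = σ) (hs1 : s 1 = 1)
    (α : G → G → ↥π.ker) (hα : ∀ σ τ : G, (α σ τ : E) * s (σ * τ) = s σ * s τ)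
    (μ : ↥π.ker → M) (hμ : ∀ a b : ↥π.ker, μ (a * b) = μ a + μ b)
    (g₀ : G) :
    ∃ m₀ : M, ∀ w : E,
      coresCocycle π s hs α (fun a => g₀ • μ (conjKer π s g₀⁻¹ a) - μ a) w
        = π w • m₀ - m₀ := by
  classical
  have coe_conj : ∀ (τ : G) (a : ↥π.ker),
      ((conjKer π s τ a : E)) = s τ * (a : E) * (s τ)⁻¹ := fun _ _ => rfl
  -- composition law for the conjugation action
  have conj_comp : ∀ (ρ τ : G) (a : ↥π.ker),
      conjKer π s ρ (conjKer π s τ a) = conjKer π s (ρ * τ) a := by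
    intro ρ τ a
    have hcomm := congrArg (Subtype.val) (hab (α ρ τ) (conjKer π s (ρ * τ) a))
    push_cast at hcomm
    rw [coe_conj] at hcomm
    apply Subtype.ext
    rw [coe_conj, coe_conj, coe_conj]
    have h3 := hα ρ τ
    calc s ρ * (s τ * (a : E) * (s τ)⁻¹) * (s ρ)⁻¹
        = (s ρ * s τ) * (a : E) * (s ρ * s τ)⁻¹ := by group
      _ = ((α ρ τ : E) * s (ρ * τ)) * (a : E) * ((α ρ τ : E) * s (ρ * τ))⁻¹ := by rw [h3]
      _ = (α ρ τ : E) * (s (ρ * τ) * (a : E) * (s (ρ * τ))⁻¹) * ((α ρ τ : E))⁻¹ := by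
          group
      _ = (s (ρ * τ) * (a : E) * (s (ρ * τ))⁻¹) * (α ρ τ : E) * ((α ρ τ : E))⁻¹ := by
          rw [hcomm]
      _ = s (ρ * τ) * (a : E) * (s (ρ * τ))⁻¹ := by group
  -- cocycle identity for α, after applying μ
  have hμ_coc : ∀ (ρ τ σ : G),
      μ (conjKer π s ρ (α τ σ)) = μ (α ρ τ) + μ (α (ρ * τ) σ) - μ (α ρ (τ * σ)) := by
    intro ρ τ σ
    have hker : conjKer π s ρ (α τ σ) * α ρ (τ * σ) = α ρ τ * α (ρ * τ) σ := by
      apply Subtype.ext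
      have h1 := hα τ σ
      have h2 := hα ρ (τ * σ)
      have h3 := hα ρ τ
      have h4 := hα (ρ * τ) σ
      have key : ((conjKer π s ρ (α τ σ) : E) * (α ρ (τ * σ) : E)) * s (ρ * (τ * σ))
          = ((α ρ τ : E) * (α (ρ * τ) σ : E)) * s (ρ * (τ * σ)) := by
        rw [coe_conj]
        calc (s ρ * (α τ σ : E) * (s ρ)⁻¹ * (α ρ (τ * σ) : E)) * s (ρ * (τ * σ))
            = s ρ * (α τ σ : E) * (s ρ)⁻¹ * ((α ρ (τ * σ) : E) * s (ρ * (τ * σ))) := by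
              group
          _ = s ρ * (α τ σ : E) * (s ρ)⁻¹ * (s ρ * s (τ * σ)) := by rw [h2]
          _ = s ρ * ((α τ σ : E) * s (τ * σ)) := by group
          _ = s ρ * (s τ * s σ) := by rw [h1]
          _ = ((α ρ τ : E) * s (ρ * τ)) * s σ := by rw [h3]; group
          _ = (α ρ τ : E) * ((α (ρ * τ) σ : E) * s ((ρ * τ) * σ)) := by rw [h4]; group
          _ = ((α ρ τ : E) * (α (ρ * τ) σ : E)) * s (ρ * (τ * σ)) := by
              rw [mul_assoc ρ τ σ]; group
      have := mul_right_cancel key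
      push_cast
      exact this
    have := congrArg μ hker
    rw [hμ, hμ] at this
    exact eq_sub_of_add_eq this
  refine ⟨-∑ τ : G, τ⁻¹ • μ (α g₀⁻¹ (g₀ * τ)), fun w => ?_⟩
  set σ := π w with hσ
  set a := kerPart π s hs w with ha
  set F : M := ∑ τ : G, τ⁻¹ • μ (α g₀⁻¹ (g₀ * τ)) with hF
  simp only [coresCocycle]
  -- termwise rewriting
  have step1 : ∀ τ : G,
      τ⁻¹ • ((g₀ • μ (conjKer π s g₀⁻¹ (conjKer π s τ a)) - μ (conjKer π s τ a))
          + (g₀ • μ (conjKer π s g₀⁻¹ (α τ σ)) - μ (α τ σ)))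
      = (τ⁻¹ • (g₀ • μ (conjKer π s (g₀⁻¹ * τ) a)) - τ⁻¹ • μ (conjKer π s τ a))
        + ((τ⁻¹ • (g₀ • μ (α g₀⁻¹ τ)) + τ⁻¹ • (g₀ • μ (α (g₀⁻¹ * τ) σ)))
          - (τ⁻¹ • (g₀ • μ (α g₀⁻¹ (τ * σ))) + τ⁻¹ • μ (α τ σ))) := by
    intro τ
    rw [conj_comp, hμ_coc]
    simp only [smul_add, smul_sub]
    abel
  rw [Finset.sum_congr rfl (fun τ _ => step1 τ)]
  rw [Finset.sum_add_distrib, Finset.sum_sub_distrib, Finset.sum_sub_distrib,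
    Finset.sum_add_distrib, Finset.sum_add_distrib]
  have E1 : ∑ τ : G, τ⁻¹ • (g₀ • μ (conjKer π s (g₀⁻¹ * τ) a))
      = ∑ τ : G, τ⁻¹ • μ (conjKer π s τ a) := by
    refine (Fintype.sum_equiv (Equiv.mulLeft g₀)
      (fun τ => τ⁻¹ • μ (conjKer π s τ a))
      (fun τ => τ⁻¹ • (g₀ • μ (conjKer π s (g₀⁻¹ * τ) a))) (fun x => ?_)).symm
    simp [smul_smul, mul_inv_rev, inv_mul_cancel_left, mul_assoc]
  have E2 : ∑ τ : G, τ⁻¹ • (g₀ • μ (α (g₀⁻¹ * τ) σ))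
      = ∑ τ : G, τ⁻¹ • μ (α τ σ) := by
    refine (Fintype.sum_equiv (Equiv.mulLeft g₀)
      (fun τ => τ⁻¹ • μ (α τ σ))
      (fun τ => τ⁻¹ • (g₀ • μ (α (g₀⁻¹ * τ) σ))) (fun x => ?_)).symm
    simp [smul_smul, mul_inv_rev, inv_mul_cancel_left, mul_assoc]
  have E3 : ∑ τ : G, τ⁻¹ • (g₀ • μ (α g₀⁻¹ τ)) = F := by
    rw [hF]
    refine (Fintype.sum_equiv (Equiv.mulLeft g₀)
      (fun τ => τ⁻¹ • μ (α g₀⁻¹ (g₀ * τ)))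
      (fun τ => τ⁻¹ • (g₀ • μ (α g₀⁻¹ τ))) (fun x => ?_)).symm
    simp [smul_smul, mul_inv_rev, mul_assoc]
  have E4 : ∑ τ : G, τ⁻¹ • (g₀ • μ (α g₀⁻¹ (τ * σ))) = σ • F := by
    rw [hF, Finset.smul_sum]
    refine (Fintype.sum_equiv ((Equiv.mulLeft g₀).trans (Equiv.mulRight σ⁻¹))
      (fun τ => σ • τ⁻¹ • μ (α g₀⁻¹ (g₀ * τ)))
      (fun τ => τ⁻¹ • (g₀ • μ (α g₀⁻¹ (τ * σ)))) (fun x => ?_)).symm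
    have harg : g₀ * x * σ⁻¹ * σ = g₀ * x := by group
    simp only [Equiv.trans_apply, Equiv.coe_mulLeft, Equiv.coe_mulRight, harg]
    rw [smul_smul, smul_smul]
    congr 1
    group
  rw [E1, E2, E3, E4]
  simp only [smul_neg]
  abel
end

section
/- Consider an extension of groups 1 → A → E →π G → 1 with A abelian and G finite; let G act on A by conjugation in E, fix a set-theoretic section s : G → E of π with s(1) = 1, and let α : G × G → A be defined by s(σ)s(τ) = α(σ,τ)·s(στ). Let M and Y be G-modules and let ξ : Y → Hom(A,M) be a G-equivariant map, where Hom(A,M) carries the action (σ•f)(a) = σ•f(σ⁻¹•a). Let Z¹_Y(E,M) be the set of pairs (y,m) with y ∈ Y^G and m a 1-cocycle of E in M (M viewed as E-module via π) whose restriction to A equals ξ(y); call two pairs (y,m), (y',m') equivalent if y = y' and m − m' is a 1-coboundary of E in M, and let H¹_Y(E,M) be the quotient. Then: (i) the map i sending the class of a 1-cocycle n of G in M to the class of (0, n∘π) is a well-defined injection of H¹(G,M) into H¹_Y(E,M); (ii) the class of (y,m) lies in the image of i if and only if y = 0; (iii) for y ∈ Y^G the function (σ,τ) ↦ ξ(y)(α(σ,τ))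 is a 2-cocycle of G in M, and there exists a 1-cocycle m of E in M with restriction to A equal to ξ(y) if and only if this 2-cocycle is a 2-coboundary of G in M. In other words, the sequence 0 → H¹(G,M) → H¹_Y(E,M) → Y^G → H²(G,M) (with third map the class of (y,m) ↦ y and fourth map y ↦ [ξ(y)∘α]) is exact. -/
/-- The inflation-restriction exact sequence
`0 → H¹(G,M) → H¹_Y(E,M) → Y^G → H²(G,M)` for the set `H¹_Y(E,M)` of classes of
pairs `(y,m)`, `y ∈ Y^G`, `m` a `1`-cocycle of `E` in `M` restricting to `ξ(y)` on `A`. -/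
theorem stmt10 {E G M Y : Type*} [Group E] [Group G] [Finite G]
    [AddCommGroup M] [DistribMulAction G M]
    [AddCommGroup Y] [DistribMulAction G Y]
    (π : E →* G) (hπ : Function.Surjective π)
    (hab : ∀ a b : ↥π.ker, a * b = b * a)
    (s : G → E) (hs : ∀ σ, π (s σ) = σ) (hs1 : s 1 = 1)
    (α : G → G → ↥π.ker) (hα : ∀ σ τ : G, (α σ τ : E) * s (σ * τ) = s σ * s τ)
    (ξ : Y → ↥π.ker → M)
    (hξhom : ∀ (y : Y) (a b : ↥π.ker), ξ y (a * b) = ξ y a + ξ y b)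
    (hξadd : ∀ (y y' : Y) (a : ↥π.ker), ξ (y + y') a = ξ y a + ξ y' a)
    (hξequiv : ∀ (σ : G) (y : Y) (a : ↥π.ker), ξ (σ • y) (conjKer π s σ a) = σ • ξ y a) :
    -- (i) the map `i : H¹(G,M) → H¹_Y(E,M)` is well defined and injective
    ((∀ n : G → M, (∀ σ τ : G, n (σ * τ) = n σ + σ • n τ) →
        ∀ a : ↥π.ker, n (π ↑a) = ξ 0 a) ∧
     (∀ n n' : G → M, (∀ σ τ : G, n (σ * τ) = n σ + σ • n τ) →
        (∀ σ τ : G, n' (σ * τ) = n' σ + σ • n' τ) →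
        ((∃ m₀ : M, ∀ w : E, n (π w) - n' (π w) = π w • m₀ - m₀) ↔
         (∃ m₀ : M, ∀ σ : G, n σ - n' σ = σ • m₀ - m₀)))) ∧
    -- (ii) the class of `(y,m)` lies in the image of `i` if and only if `y = 0`
    (∀ (y : Y) (m : E → M), (∀ σ : G, σ • y = y) →
        (∀ w₁ w₂ : E, m (w₁ * w₂) = m w₁ + π w₁ • m w₂) →
        (∀ a : ↥π.ker, m ↑a = ξ y a) →
        ((∃ n : G → M, (∀ σ τ : G, n (σ * τ) = n σ + σ • n τ) ∧ y = 0 ∧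
            ∃ m₀ : M, ∀ w : E, m w - n (π w) = π w • m₀ - m₀) ↔ y = 0)) ∧
    -- (iii) transgression: `ξ(y) ∘ α` is a `2`-cocycle, and `y ∈ Y^G` lifts to a class
    -- in `H¹_Y(E,M)` if and only if this `2`-cocycle is a `2`-coboundary
    (∀ y : Y, (∀ σ : G, σ • y = y) →
        ((∀ σ τ υ : G,
            σ • ξ y (α τ υ) - ξ y (α (σ * τ) υ) + ξ y (α σ (τ * υ)) - ξ y (α σ τ) = 0) ∧
         ((∃ m : E → M, (∀ w₁ w₂ : E, m (w₁ * w₂) = m w₁ + π w₁ • m w₂) ∧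
              ∀ a : ↥π.ker, m ↑a = ξ y a) ↔
          (∃ bb : G → M, ∀ σ τ : G, ξ y (α σ τ) = σ • bb τ - bb (σ * τ) + bb σ)))) := by
  -- general helpers
  have hker1 : ∀ a : ↥π.ker, π (a : E) = 1 := fun a => a.2
  have hξ1 : ∀ y : Y, ξ y 1 = 0 := by
    intro y
    have h := hξhom y 1 1
    rw [mul_one] at h
    exact (add_left_cancel (a := ξ y 1) (by rw [add_zero]; exact h)).symm
  have hξ0 : ∀ a : ↥π.ker, ξ 0 a = 0 := by
    intro a
    have h := hξadd 0 0 a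
    rw [add_zero] at h
    exact (add_left_cancel (a := ξ 0 a) (by rw [add_zero]; exact h)).symm
  have kmem : ∀ w : E, (s (π w))⁻¹ * w ∈ π.ker := by
    intro w
    rw [MonoidHom.mem_ker]
    simp [hs]
  have hα' : ∀ σ τ : G, (α σ τ : E) = s σ * s τ * (s (σ * τ))⁻¹ := by
    intro σ τ
    rw [← hα σ τ]
    group
  refine ⟨⟨?_, ?_⟩, ?_, ?_⟩
  · -- (i) well-definedness
    intro n hn a
    have hn1 : n 1 = 0 := by
      have h := hn 1 1
      rw [mul_one, one_smul] at h
      exact (add_left_cancel (a := n 1) (by rw [add_zero]; exact h)).symm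
    rw [hker1 a, hn1, hξ0 a]
  · -- (i) injectivity
    intro n n' _ _
    constructor
    · rintro ⟨m₀, h⟩
      refine ⟨m₀, fun σ => ?_⟩
      obtain ⟨w, rfl⟩ := hπ σ
      exact h w
    · rintro ⟨m₀, h⟩
      exact ⟨m₀, fun w => h (π w)⟩
  · -- (ii)
    intro y m _ hm hrest
    constructor
    · rintro ⟨n, _, hy0, _⟩
      exact hy0
    · intro hy0
      subst hy0
      refine ⟨fun σ => m (s σ), ?_, rfl, 0, ?_⟩
      · intro σ τ
        have e1 : m ((α σ τ : E) * s (σ * τ)) = m (s (σ * τ)) := by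
          rw [hm, hrest (α σ τ), hker1 (α σ τ), one_smul, hξ0, zero_add]
        calc m (s (σ * τ)) = m ((α σ τ : E) * s (σ * τ)) := e1.symm
          _ = m (s σ * s τ) := by rw [hα]
          _ = m (s σ) + σ • m (s τ) := by rw [hm, hs]
      · intro w
        have hw : w = s (π w) * ((s (π w))⁻¹ * w) := by group
        have hmk : m ((s (π w))⁻¹ * w) = 0 := by
          have := hrest ⟨(s (π w))⁻¹ * w, kmem w⟩
          rw [hξ0] at this
          exact this
        rw [smul_zero, sub_zero, sub_eq_zero]
        conv_lhs => rw [hw]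
        rw [hm, hmk, smul_zero, add_zero]
  · -- (iii)
    intro y hy
    have heq : ∀ (σ : G) (a : ↥π.ker), σ • ξ y a = ξ y (conjKer π s σ a) := by
      intro σ a
      rw [← hξequiv σ y a, hy σ]
    constructor
    · -- 2-cocycle property
      intro σ τ υ
      have key : ξ y (α σ τ) + ξ y (α (σ * τ) υ) = σ • ξ y (α τ υ) + ξ y (α σ (τ * υ)) := by
        rw [heq σ (α τ υ), ← hξhom, ← hξhom]
        congr 1
        apply Subtype.ext
        push_cast
        show (α σ τ : E) * (α (σ * τ) υ : E)
            = (conjKer π s σ (α τ υ) : E) * (α σ (τ * υ) : E)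
        show (α σ τ : E) * (α (σ * τ) υ : E)
            = (s σ * (α τ υ : E) * (s σ)⁻¹) * (α σ (τ * υ) : E)
        rw [hα' σ τ, hα' (σ * τ) υ, hα' τ υ, hα' σ (τ * υ), mul_assoc σ τ υ]
        group
      rw [show σ • ξ y (α τ υ) - ξ y (α (σ * τ) υ) + ξ y (α σ (τ * υ)) - ξ y (α σ τ)
            = (σ • ξ y (α τ υ) + ξ y (α σ (τ * υ))) - (ξ y (α σ τ) + ξ y (α (σ * τ) υ))
          by abel, ← key, sub_self]
    · constructor
      · -- lift exists → coboundary
        rintro ⟨m, hm, hrest⟩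
        refine ⟨fun σ => m (s σ), fun σ τ => ?_⟩
        have e1 : m ((α σ τ : E) * s (σ * τ)) = ξ y (α σ τ) + m (s (σ * τ)) := by
          rw [hm, hrest (α σ τ), hker1 (α σ τ), one_smul]
        have e2 : m ((α σ τ : E) * s (σ * τ)) = m (s σ) + σ • m (s τ) := by
          rw [hα, hm, hs]
        have e3 : ξ y (α σ τ) + m (s (σ * τ)) = m (s σ) + σ • m (s τ) := by
          rw [← e1, e2]
        show ξ y (α σ τ) = σ • m (s τ) - m (s (σ * τ)) + m (s σ)
        rw [show σ • m (s τ) - m (s (σ * τ)) + m (s σ)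
              = (m (s σ) + σ • m (s τ)) - m (s (σ * τ)) by abel, ← e3]
        abel
      · -- coboundary → lift exists
        rintro ⟨bb, hbb⟩
        have hα11 : α 1 1 = 1 := by
          apply Subtype.ext
          have h := hα 1 1
          rw [mul_one, hs1] at h
          simpa using h
        have hbb1 : bb 1 = 0 := by
          have h := hbb 1 1
          rw [hα11, hξ1, mul_one, one_smul] at h
          -- h : 0 = bb 1 - bb 1 + bb 1
          rw [sub_add_cancel] at h
          exact h.symm
        refine ⟨fun w => bb (π w) + π w • ξ y ⟨(s (π w))⁻¹ * w, kmem w⟩, ?_, ?_⟩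
        · intro w₁ w₂
          have mem12 : w₁ * w₂ * (s (π w₁ * π w₂))⁻¹ ∈ π.ker := by
            simp only [MonoidHom.mem_ker, map_mul, map_inv, hs]; group
          have mem1 : w₁ * (s (π w₁))⁻¹ ∈ π.ker := by
            simp only [MonoidHom.mem_ker, map_mul, map_inv, hs]; group
          have mem2 : s (π w₁ * π w₂) * (s (π w₂))⁻¹ * w₂ * (s (π w₁ * π w₂))⁻¹ ∈ π.ker := by
            simp only [MonoidHom.mem_ker, map_mul, map_inv, hs]; group
          have c12 : (π (w₁ * w₂)) • ξ y ⟨(s (π (w₁ * w₂)))⁻¹ * (w₁ * w₂), kmem (w₁ * w₂)⟩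
              = ξ y ⟨w₁ * w₂ * (s (π w₁ * π w₂))⁻¹, mem12⟩ := by
            rw [heq]
            congr 1
            apply Subtype.ext
            show s (π (w₁ * w₂)) * ((s (π (w₁ * w₂)))⁻¹ * (w₁ * w₂)) * (s (π (w₁ * w₂)))⁻¹
              = w₁ * w₂ * (s (π w₁ * π w₂))⁻¹
            rw [map_mul]
            group
          have c1 : (π w₁) • ξ y ⟨(s (π w₁))⁻¹ * w₁, kmem w₁⟩
              = ξ y ⟨w₁ * (s (π w₁))⁻¹, mem1⟩ := by
            rw [heq]
            congr 1
            apply Subtype.ext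
            show s (π w₁) * ((s (π w₁))⁻¹ * w₁) * (s (π w₁))⁻¹ = w₁ * (s (π w₁))⁻¹
            group
          have c2 : (π w₁) • ((π w₂) • ξ y ⟨(s (π w₂))⁻¹ * w₂, kmem w₂⟩)
              = ξ y ⟨s (π w₁ * π w₂) * (s (π w₂))⁻¹ * w₂ * (s (π w₁ * π w₂))⁻¹, mem2⟩ := by
            rw [← mul_smul, heq]
            congr 1
            apply Subtype.ext
            show s (π w₁ * π w₂) * ((s (π w₂))⁻¹ * w₂) * (s (π w₁ * π w₂))⁻¹
              = s (π w₁ * π w₂) * (s (π w₂))⁻¹ * w₂ * (s (π w₁ * π w₂))⁻¹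
            group
          have keyprod : (⟨w₁ * w₂ * (s (π w₁ * π w₂))⁻¹, mem12⟩ : ↥π.ker)
              = ⟨w₁ * (s (π w₁))⁻¹, mem1⟩ * α (π w₁) (π w₂)
                * ⟨s (π w₁ * π w₂) * (s (π w₂))⁻¹ * w₂ * (s (π w₁ * π w₂))⁻¹, mem2⟩ := by
            apply Subtype.ext
            show w₁ * w₂ * (s (π w₁ * π w₂))⁻¹
              = w₁ * (s (π w₁))⁻¹ * (α (π w₁) (π w₂) : E)
                * (s (π w₁ * π w₂) * (s (π w₂))⁻¹ * w₂ * (s (π w₁ * π w₂))⁻¹)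
            rw [hα']
            group
          show bb (π (w₁ * w₂)) + (π (w₁ * w₂)) • ξ y ⟨(s (π (w₁ * w₂)))⁻¹ * (w₁ * w₂), kmem (w₁ * w₂)⟩
            = (bb (π w₁) + (π w₁) • ξ y ⟨(s (π w₁))⁻¹ * w₁, kmem w₁⟩)
              + π w₁ • (bb (π w₂) + (π w₂) • ξ y ⟨(s (π w₂))⁻¹ * w₂, kmem w₂⟩)
          rw [smul_add, c12, c1, c2, keyprod, hξhom, hξhom, hbb (π w₁) (π w₂), map_mul]
          abel
        · intro a
          show bb (π (a : E)) + (π (a : E)) • ξ y ⟨(s (π (a : E)))⁻¹ * (a : E), kmem (a : E)⟩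
            = ξ y a
          have ha1 : π (a : E) = 1 := hker1 a
          have h2 : (⟨(s (π (a : E)))⁻¹ * (a : E), kmem (a : E)⟩ : ↥π.ker) = a := by
            apply Subtype.ext
            show (s (π (a : E)))⁻¹ * (a : E) = (a : E)
            rw [ha1, hs1, inv_one, one_mul]
          rw [h2, ha1, hbb1, one_smul, zero_add]
end

section
/- Let G be a finite group and consider two extensions 1 → A' → E' →π' G → 1 and 1 → A → E →π G → 1 with A and A' abelian, together with a group homomorphism h̃ : E' → E satisfying π ∘ h̃ = π' and h̃(A') ⊆ A; write h : A' → A for the restriction of h̃. Let M and Y be G-modules and ξ : Y → Hom(A,M) a G-equivariant map; set ξ' : Y → Hom(A',M), ξ'(y) := ξ(y) ∘ h. Define H¹_Y(E,M) as the set of pairs (y,m), y ∈ Y^G and m a 1-cocycle of E in M with restriction to A equal to ξ(y), modulo the equivalence identifying (y,m) and (y,m') when m − m' is a 1-coboundary of E in M; define H¹_Y(E',M) analogously using ξ'. Then the map ψ' sending the class of (y,m) to the class of (y, m ∘ h̃) is a well-defined bijection from H¹_Y(E,M) to H¹_Y(E',M). -/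
/-- The map `A' → A` on kernels induced by a morphism `ht : E' → E` of extensions. -/
def kerMap {E E' G : Type*} [Group E] [Group E'] [Group G]
    (π : E →* G) (π' : E' →* G) (ht : E' →* E) (hcomp : ∀ w' : E', π (ht w') = π' w')
    (a' : ↥π'.ker) : ↥π.ker :=
  ⟨ht ↑a', by
    have h := a'.2
    rw [MonoidHom.mem_ker] at h ⊢
    rw [hcomp, h]⟩

/-- Conjugation of `a ∈ A = ker π` by `w ∈ E`, giving the `G`-action on `A`. -/
def conjKerE {E G : Type*} [Group E] [Group G] (π : E →* G) (w : E) (a : ↥π.ker) :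
    ↥π.ker :=
  ⟨w * (a : E) * w⁻¹, by
    have h := a.2
    rw [MonoidHom.mem_ker] at h ⊢
    simp [h]⟩

/-- Lemma "Nat2": for a morphism `ht : E' → E` of extensions of `G`, the pullback map
`ψ' : H¹_Y(E,M) → H¹_Y(E',M)`, sending the class of `(y,m)` to the class of
`(y, m ∘ ht)`, is a well-defined bijection. -/
theorem stmt11 {E E' G M Y : Type*} [Group E] [Group E'] [Group G] [Finite G]
    [AddCommGroup M] [DistribMulAction G M]
    [AddCommGroup Y] [DistribMulAction G Y]
    (π : E →* G) (hπ : Function.Surjective π)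
    (π' : E' →* G) (hπ' : Function.Surjective π')
    (hab : ∀ a b : ↥π.ker, a * b = b * a)
    (hab' : ∀ a b : ↥π'.ker, a * b = b * a)
    (ht : E' →* E) (hcomp : ∀ w' : E', π (ht w') = π' w')
    (ξ : Y → ↥π.ker → M)
    (hξhom : ∀ (y : Y) (a b : ↥π.ker), ξ y (a * b) = ξ y a + ξ y b)
    (hξequiv : ∀ (w : E) (y : Y) (a : ↥π.ker),
        ξ (π w • y) (conjKerE π w a) = π w • ξ y a) :
    -- ψ' sends cocycle pairs to cocycle pairs
    (∀ (y : Y) (m : E → M), (∀ σ : G, σ • y = y) →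
        (∀ w₁ w₂ : E, m (w₁ * w₂) = m w₁ + π w₁ • m w₂) →
        (∀ a : ↥π.ker, m ↑a = ξ y a) →
        ((∀ w₁' w₂' : E', m (ht (w₁' * w₂')) = m (ht w₁') + π' w₁' • m (ht w₂')) ∧
         (∀ a' : ↥π'.ker, m (ht ↑a') = ξ y (kerMap π π' ht hcomp a')))) ∧
    -- ψ' is well defined on classes, and injective
    (∀ (y : Y) (m m' : E → M), (∀ σ : G, σ • y = y) →
        (∀ w₁ w₂ : E, m (w₁ * w₂) = m w₁ + π w₁ • m w₂) →
        (∀ a : ↥π.ker, m ↑a = ξ y a) →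
        (∀ w₁ w₂ : E, m' (w₁ * w₂) = m' w₁ + π w₁ • m' w₂) →
        (∀ a : ↥π.ker, m' ↑a = ξ y a) →
        ((∃ m₀ : M, ∀ w' : E', m (ht w') - m' (ht w') = π' w' • m₀ - m₀) ↔
         (∃ m₀ : M, ∀ w : E, m w - m' w = π w • m₀ - m₀))) ∧
    -- ψ' is surjective on classes
    (∀ (y : Y) (m' : E' → M), (∀ σ : G, σ • y = y) →
        (∀ w₁' w₂' : E', m' (w₁' * w₂') = m' w₁' + π' w₁' • m' w₂') →
        (∀ a' : ↥π'.ker, m' ↑a' = ξ y (kerMap π π' ht hcomp a')) →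
        ∃ m : E → M, (∀ w₁ w₂ : E, m (w₁ * w₂) = m w₁ + π w₁ • m w₂) ∧
          (∀ a : ↥π.ker, m ↑a = ξ y a) ∧
          ∃ m₀ : M, ∀ w' : E', m (ht w') - m' w' = π' w' • m₀ - m₀) := by
  refine ⟨?_, ?_, ?_⟩
  · -- Part 1
    intro y m hy hcoc hres
    constructor
    · intro w₁' w₂'
      rw [map_mul, hcoc, hcomp]
    · intro a'
      exact hres (kerMap π π' ht hcomp a')
  · -- Part 2
    intro y m m' hy hcoc hres hcoc' hres'
    constructor
    · rintro ⟨m₀, hm₀⟩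
      refine ⟨m₀, fun w => ?_⟩
      obtain ⟨w', hw'⟩ := hπ' (π w)
      have hker : ((ht w')⁻¹ * w) ∈ π.ker := by
        rw [MonoidHom.mem_ker, map_mul, map_inv, hcomp, hw', inv_mul_cancel]
      set a : ↥π.ker := ⟨(ht w')⁻¹ * w, hker⟩ with ha
      have hw : w = ht w' * (a : E) := by
        rw [ha]; simp
      calc m w - m' w = m (ht w' * (a : E)) - m' (ht w' * (a : E)) := by rw [← hw]
        _ = (m (ht w') + π (ht w') • m (a : E)) - (m' (ht w') + π (ht w') • m' (a : E)) := by
              rw [hcoc, hcoc']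
        _ = m (ht w') - m' (ht w') := by rw [hres a, hres' a]; abel
        _ = π' w' • m₀ - m₀ := hm₀ w'
        _ = π w • m₀ - m₀ := by rw [hw']
    · rintro ⟨m₀, hm₀⟩
      exact ⟨m₀, fun w' => by rw [hm₀, hcomp]⟩
  · -- Part 3
    intro y m' hy hcoc' hres'
    have hξ1 : ξ y 1 = 0 := by
      have h := hξhom y 1 1
      rw [one_mul] at h
      exact (left_eq_add.mp h)
    have hξinv : ∀ a : ↥π.ker, ξ y a⁻¹ = - ξ y a := by
      intro a
      have h := hξhom y a a⁻¹
      rw [mul_inv_cancel, hξ1] at h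
      exact eq_neg_of_add_eq_zero_right h.symm
    have hξconj : ∀ (w : E) (a : ↥π.ker), ξ y (conjKerE π w a) = π w • ξ y a := by
      intro w a
      have h := hξequiv w y a
      rwa [hy (π w)] at h
    have hm'1 : m' 1 = 0 := by
      have h := hcoc' 1 1
      rw [one_mul, map_one, one_smul] at h
      exact left_eq_add.mp h
    -- key: F w' a := ξ y a + m' w' depends only on ↑a * ht w'
    have key : ∀ (a₁ a₂ : ↥π.ker) (w₁' w₂' : E'),
        (a₁ : E) * ht w₁' = (a₂ : E) * ht w₂' →
        ξ y a₁ + m' w₁' = ξ y a₂ + m' w₂' := by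
      intro a₁ a₂ w₁' w₂' heq
      have hπeq : π' w₁' = π' w₂' := by
        have : π ((a₁ : E) * ht w₁') = π ((a₂ : E) * ht w₂') := by rw [heq]
        rwa [map_mul, map_mul, a₁.2, a₂.2, one_mul, one_mul, hcomp, hcomp] at this
      have hb'ker : (w₁'⁻¹ * w₂') ∈ π'.ker := by
        rw [MonoidHom.mem_ker, map_mul, map_inv, hπeq, inv_mul_cancel]
      set b' : ↥π'.ker := ⟨w₁'⁻¹ * w₂', hb'ker⟩ with hb'
      have hw₂' : w₂' = w₁' * (b' : E') := by rw [hb']; simp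
      have ha₂ : a₂ = a₁ * conjKerE π (ht w₁') (kerMap π π' ht hcomp b')⁻¹ := by
        apply Subtype.ext
        have h2 : (a₂ : E) = (a₁ : E) * ht w₁' * (ht w₂')⁻¹ := by
          rw [heq]; group
        rw [h2]
        show (a₁ : E) * ht w₁' * (ht w₂')⁻¹
            = (a₁ : E) * (ht w₁' * (ht (b' : E'))⁻¹ * (ht w₁')⁻¹)
        rw [hb']
        simp [map_mul]
        group
      have hξa₂ : ξ y a₂ = ξ y a₁ - π' w₁' • ξ y (kerMap π π' ht hcomp b') := by
        rw [ha₂, hξhom, hξconj, hξinv, hcomp, smul_neg, sub_eq_add_neg]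
      have hm'₂ : m' w₂' = m' w₁' + π' w₁' • ξ y (kerMap π π' ht hcomp b') := by
        rw [hw₂', hcoc', hres' b']
      rw [hξa₂, hm'₂]
      abel
    obtain ⟨s, hs⟩ := hπ'.hasRightInverse
    have haOf : ∀ w : E, (w * (ht (s (π w)))⁻¹) ∈ π.ker := by
      intro w
      rw [MonoidHom.mem_ker, map_mul, map_inv, hcomp, hs, mul_inv_cancel]
    set m : E → M := fun w => ξ y ⟨w * (ht (s (π w)))⁻¹, haOf w⟩ + m' (s (π w)) with hm
    have key' : ∀ (w : E) (a : ↥π.ker) (w' : E'), (a : E) * ht w' = w →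
        m w = ξ y a + m' w' := by
      intro w a w' hw
      have : m w = ξ y ⟨w * (ht (s (π w)))⁻¹, haOf w⟩ + m' (s (π w)) := rfl
      rw [this]
      apply key
      rw [← hw]
      simp
    refine ⟨m, ?_, ?_, 0, ?_⟩
    · intro w₁ w₂
      have h1 : m w₁ = ξ y ⟨w₁ * (ht (s (π w₁)))⁻¹, haOf w₁⟩ + m' (s (π w₁)) := rfl
      have h2 : m w₂ = ξ y ⟨w₂ * (ht (s (π w₂)))⁻¹, haOf w₂⟩ + m' (s (π w₂)) := rfl
      set a₁ : ↥π.ker := ⟨w₁ * (ht (s (π w₁)))⁻¹, haOf w₁⟩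
      set a₂ : ↥π.ker := ⟨w₂ * (ht (s (π w₂)))⁻¹, haOf w₂⟩
      have h12 : m (w₁ * w₂)
          = ξ y (a₁ * conjKerE π (ht (s (π w₁))) a₂) + m' (s (π w₁) * s (π w₂)) := by
        apply key'
        show (a₁ : E) * (ht (s (π w₁)) * (a₂ : E) * (ht (s (π w₁)))⁻¹) * ht (s (π w₁) * s (π w₂))
            = w₁ * w₂
        have e₁ : (a₁ : E) = w₁ * (ht (s (π w₁)))⁻¹ := rfl
        have e₂ : (a₂ : E) = w₂ * (ht (s (π w₂)))⁻¹ := rfl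
        rw [e₁, e₂, map_mul]
        group
      rw [h12, hξhom, hξconj, hcoc', h1, h2, hcomp, hs, smul_add]
      abel
    · intro a
      have h := key' (a : E) a 1 (by simp)
      rw [h, hm'1, add_zero]
    · intro w'
      have h := key' (ht w') 1 w' (by simp)
      rw [h, hξ1, zero_add]
      simp
end

section
/- Let Γ be a finite group and let p : Y → Z be a surjective map of Γ-modules with kernel X. Assume that the norm map X → X^Γ, x ↦ Σ_{γ∈Γ} γ•x, is surjective onto X^Γ (i.e. Ĥ⁰(Γ,X) = 0). Write p̄ : Y_Γ → Z_Γ for the induced map on coinvariants, N_Y : Y_Γ → Y^Γ and N_Z : Z_Γ → Z^Γ for the maps induced by the norm, and p^Γ : Y^Γ → Z^Γ for the restriction of p to invariants. Then for every z ∈ Z_Γ and y ∈ Y^Γ with p^Γ(y) = N_Z(z), there exists ỹ ∈ Y_Γ with p̄(ỹ) = z and N_Y(ỹ) = y. (The square formed by p̄, the two norm maps, and p^Γ is semicartesian.) -/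
/-- The semicartesian norm square from the proof of Proposition "LocImKap": if
`p : Y → Z` is a surjective map of `Γ`-modules whose kernel `X` satisfies
`Ĥ⁰(Γ,X) = 0`, then for `z ∈ Z_Γ` and `y ∈ Y^Γ` with `p^Γ(y) = N_Z(z)` there is
`ỹ ∈ Y_Γ` with `p̄(ỹ) = z` and `N_Y(ỹ) = y`. -/
theorem stmt12 {Γ Y Z : Type*} [Group Γ] [Fintype Γ]
    [AddCommGroup Y] [AddCommGroup Z]
    [DistribMulAction Γ Y] [DistribMulAction Γ Z]
    (p : Y →+ Z) (hp : Function.Surjective p)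
    (hequiv : ∀ (γ : Γ) (x : Y), p (γ • x) = γ • p x)
    (hX : ∀ x : Y, p x = 0 → (∀ γ : Γ, γ • x = x) →
        ∃ x' : Y, p x' = 0 ∧ (∑ γ : Γ, γ • x') = x)
    (z : Z) (y : Y) (hyinv : ∀ γ : Γ, γ • y = y)
    (hcompat : p y = ∑ γ : Γ, γ • z) :
    ∃ ytilde : Y, (∑ γ : Γ, γ • ytilde) = y ∧
      p ytilde - z ∈ AddSubgroup.closure {w : Z | ∃ (γ : Γ) (z' : Z), w = γ • z' - z'} := by
  obtain ⟨y₀, hy₀⟩ := hp z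
  set N : Y := ∑ γ : Γ, γ • y₀ with hN
  have hNinv : ∀ γ₀ : Γ, γ₀ • N = N := by
    intro γ₀
    rw [hN, Finset.smul_sum]
    refine Fintype.sum_equiv (Equiv.mulLeft γ₀) _ _ fun γ => ?_
    simp [mul_smul]
  have hpN : p N = p y := by
    rw [hN, map_sum, hcompat]
    exact Finset.sum_congr rfl fun γ _ => by rw [hequiv, hy₀]
  obtain ⟨x', hpx', hsx'⟩ := hX (y - N) (by simp [hpN]) (by
    intro γ; rw [smul_sub, hyinv, hNinv])
  refine ⟨y₀ + x', ?_, ?_⟩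
  · have : ∑ γ : Γ, γ • (y₀ + x') = N + (y - N) := by
      rw [← hsx', ← Finset.sum_add_distrib]
      exact Finset.sum_congr rfl fun γ _ => smul_add γ y₀ x'
    rw [this]; abel
  · simpa [hy₀, hpx'] using (AddSubgroup.closure {w : Z | ∃ (γ : Γ) (z' : Z), w = γ • z' - z'}).zero_mem
end

section
/- Let G be a finite group, let B₁, B₂, B₄ be G-modules, and let u : B₁ → B₄ and v : B₂ → B₄ be G-equivariant additive maps. Let P = {(b₁,b₂) ∈ B₁ × B₂ : u(b₁) = v(b₂)} with projections π₁, π₂. Assume (a) the map B₁ × B₂ → B₄, (b₁,b₂) ↦ u(b₁) − v(b₂), is surjective, and (b) every 1-cocycle of G in B₄ is a 1-coboundary (H¹(G,B₄) = 0). Then: for all 2-cocycles a₁ of G in B₁ and a₂ of G in B₂ such that u∘a₁ − v∘a₂ is a 2-coboundary of G in B₄, there exists a 2-cocycle a of G in P with π₁∘a − a₁ a 2-coboundary of G in B₁ and π₂∘a − a₂ a 2-coboundary of G in B₂; moreover a is unique up to 2-coboundary, i.e. if a and a' both have this property then a − a' is a 2-coboundary of G in P. In other words, the square H²(G,P) →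 H²(G,B₁), H²(G,P) → H²(G,B₂), H²(G,B₁) → H²(G,B₄), H²(G,B₂) → H²(G,B₄) is cartesian. -/
/-- A `2`-cocycle of `G` in the `G`-module `M`. -/
def IsTwoCocycle {G M : Type*} [Group G] [AddCommGroup M] [DistribMulAction G M]
    (a : G → G → M) : Prop :=
  ∀ σ τ υ : G, σ • a τ υ - a (σ * τ) υ + a σ (τ * υ) - a σ τ = 0

/-- A `2`-coboundary of `G` in the `G`-module `M`. -/
def IsTwoCoboundary {G M : Type*} [Group G] [AddCommGroup M] [DistribMulAction G M]
    (a : G → G → M) : Prop :=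
  ∃ b : G → M, ∀ σ τ : G, a σ τ = σ • b τ - b (σ * τ) + b σ

section Helpers
variable {G M : Type*} [Group G] [AddCommGroup M] [DistribMulAction G M]

lemma myCob_cocycle (b : G → M) :
    IsTwoCocycle (fun σ τ => σ • b τ - b (σ * τ) + b σ) := by
  intro σ τ υ
  simp only [smul_add, smul_sub, ← mul_smul, mul_assoc]
  abel

lemma myCocycle_sub {a a' : G → G → M} (h : IsTwoCocycle a) (h' : IsTwoCocycle a') :
    IsTwoCocycle (fun σ τ => a σ τ - a' σ τ) := by
  intro σ τ υ
  have h3 : (σ • a τ υ - a (σ*τ) υ + a σ (τ*υ) - a σ τ)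
      - (σ • a' τ υ - a' (σ*τ) υ + a' σ (τ*υ) - a' σ τ) = 0 := by
    rw [h σ τ υ, h' σ τ υ, sub_zero]
  simp only [smul_sub]
  rw [← h3]; abel

lemma myCob_sub {f f' : G → G → M} (h : IsTwoCoboundary f) (h' : IsTwoCoboundary f') :
    IsTwoCoboundary (fun σ τ => f σ τ - f' σ τ) := by
  obtain ⟨b, hb⟩ := h; obtain ⟨b', hb'⟩ := h'
  refine ⟨fun σ => b σ - b' σ, fun σ τ => ?_⟩
  simp only [smul_sub]
  rw [hb, hb']; abel

end Helpers

/-- Tate's cartesian square (Lemma "cart" / the claim in Lemma "tildePiExists"): for the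
fiber product `P = {(b₁,b₂) : u b₁ = v b₂}`, if `(b₁,b₂) ↦ u b₁ − v b₂` is surjective and
`H¹(G,B₄) = 0`, then `H²(G,P)` is the fiber product of `H²(G,B₁)` and `H²(G,B₂)`
over `H²(G,B₄)`. -/
theorem stmt14 {G B₁ B₂ B₄ : Type*} [Group G] [Finite G]
    [AddCommGroup B₁] [AddCommGroup B₂] [AddCommGroup B₄]
    [DistribMulAction G B₁] [DistribMulAction G B₂] [DistribMulAction G B₄]
    (u : B₁ →+ B₄) (v : B₂ →+ B₄)
    (hu : ∀ (g : G) (x : B₁), u (g • x) = g • u x)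
    (hv : ∀ (g : G) (x : B₂), v (g • x) = g • v x)
    (hsurj : ∀ b₄ : B₄, ∃ (b₁ : B₁) (b₂ : B₂), u b₁ - v b₂ = b₄)
    (hH1 : ∀ c : G → B₄, (∀ σ τ : G, c (σ * τ) = c σ + σ • c τ) →
        ∃ m : B₄, ∀ σ : G, c σ = σ • m - m)
    (a₁ : G → G → B₁) (a₂ : G → G → B₂)
    (h₁ : IsTwoCocycle a₁) (h₂ : IsTwoCocycle a₂)
    (hdiff : IsTwoCoboundary (fun σ τ => u (a₁ σ τ) - v (a₂ σ τ))) :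
    (∃ a : G → G → B₁ × B₂,
      (∀ σ τ : G, u (a σ τ).1 = v (a σ τ).2) ∧ IsTwoCocycle a ∧
      IsTwoCoboundary (fun σ τ => (a σ τ).1 - a₁ σ τ) ∧
      IsTwoCoboundary (fun σ τ => (a σ τ).2 - a₂ σ τ)) ∧
    (∀ a a' : G → G → B₁ × B₂,
      ((∀ σ τ : G, u (a σ τ).1 = v (a σ τ).2) ∧ IsTwoCocycle a ∧
        IsTwoCoboundary (fun σ τ => (a σ τ).1 - a₁ σ τ) ∧
        IsTwoCoboundary (fun σ τ => (a σ τ).2 - a₂ σ τ)) →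
      ((∀ σ τ : G, u (a' σ τ).1 = v (a' σ τ).2) ∧ IsTwoCocycle a' ∧
        IsTwoCoboundary (fun σ τ => (a' σ τ).1 - a₁ σ τ) ∧
        IsTwoCoboundary (fun σ τ => (a' σ τ).2 - a₂ σ τ)) →
      ∃ b : G → B₁ × B₂, (∀ σ : G, u (b σ).1 = v (b σ).2) ∧
        ∀ σ τ : G, a σ τ - a' σ τ = σ • b τ - b (σ * τ) + b σ) := by
  constructor
  · -- existence
    obtain ⟨b, hb⟩ := hdiff
    choose b₁ b₂ hspec using fun x => hsurj (b x)
    refine ⟨fun σ τ => (a₁ σ τ - (σ • b₁ τ - b₁ (σ * τ) + b₁ σ),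
                        a₂ σ τ - (σ • b₂ τ - b₂ (σ * τ) + b₂ σ)), ?_, ?_, ?_, ?_⟩
    · intro σ τ
      have key := hb σ τ
      rw [← hspec τ, ← hspec (σ * τ), ← hspec σ] at key
      simp only [smul_sub] at key
      rw [← sub_eq_zero] at key
      simp only [map_sub, map_add, hu, smul_sub, hv]
      rw [← sub_eq_zero, ← key]
      abel
    · intro σ τ υ
      have hc₁ := myCocycle_sub h₁ (myCob_cocycle b₁) σ τ υ
      have hc₂ := myCocycle_sub h₂ (myCob_cocycle b₂) σ τ υ
      simp only at hc₁ hc₂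
      refine Prod.ext ?_ ?_ <;> simp [hc₁, hc₂]
    · refine ⟨fun σ => -b₁ σ, fun σ τ => ?_⟩
      simp only [smul_neg]
      abel
    · refine ⟨fun σ => -b₂ σ, fun σ τ => ?_⟩
      simp only [smul_neg]
      abel
  · -- uniqueness
    rintro a a' ⟨hP, hc, hd1, hd2⟩ ⟨hP', hc', hd1', hd2'⟩
    have hdp : IsTwoCoboundary (fun σ τ => (a σ τ).1 - (a' σ τ).1) := by
      have := myCob_sub hd1 hd1'
      simpa [sub_sub_sub_cancel_right] using this
    have hdq : IsTwoCoboundary (fun σ τ => (a σ τ).2 - (a' σ τ).2) := by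
      have := myCob_sub hd2 hd2'
      simpa [sub_sub_sub_cancel_right] using this
    obtain ⟨p, hp⟩ := hdp
    obtain ⟨q, hq⟩ := hdq
    simp only at hp hq
    have hfc : ∀ σ τ : G, (u (p (σ * τ)) - v (q (σ * τ)))
        = (u (p σ) - v (q σ)) + σ • (u (p τ) - v (q τ)) := by
      intro σ τ
      have e1 := congrArg u (hp σ τ)
      have e2 := congrArg v (hq σ τ)
      simp only [map_sub, map_add, hu, hv] at e1 e2
      have e3 := hP σ τ
      have e4 := hP' σ τ
      rw [← sub_eq_zero] at e1 e2
      have key : (u (a σ τ).1 - u (a' σ τ).1 - (σ • u (p τ) - u (p (σ * τ)) + u (p σ)))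
          - (v (a σ τ).2 - v (a' σ τ).2 - (σ • v (q τ) - v (q (σ * τ)) + v (q σ))) = 0 := by
        rw [e1, e2, sub_zero]
      rw [← sub_eq_zero, ← key, e3, e4]
      simp only [smul_sub]
      abel
    obtain ⟨m, hm⟩ := hH1 (fun x => u (p x) - v (q x)) hfc
    obtain ⟨m₁, m₂, hm12⟩ := hsurj m
    refine ⟨fun σ => (p σ - (σ • m₁ - m₁), q σ - (σ • m₂ - m₂)), ?_, ?_⟩
    · intro σ
      have key := hm σ
      rw [← hm12] at key
      simp only [smul_sub] at key
      rw [← sub_eq_zero] at key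
      simp only [map_sub, hu, hv, smul_sub]
      rw [← sub_eq_zero, ← key]
      abel
    · intro σ τ
      refine Prod.ext ?_ ?_ <;>
        simp only [Prod.fst_sub, Prod.snd_sub, Prod.smul_fst, Prod.smul_snd,
          Prod.fst_add, Prod.snd_add, Prod.mk_sub_mk, Prod.smul_mk, Prod.mk_add_mk]
      · rw [hp σ τ]
        simp only [smul_sub, ← mul_smul]
        abel
      · rw [hq σ τ]
        simp only [smul_sub, ← mul_smul]
        abel
end

section
/- Let K/F be a finite Galois extension of fields with Galois group G, and let S be a G-set. Let M be the group of all functions f : S → Kˣ under pointwise multiplication, with G acting by (σ•f)(s) = σ(f(σ⁻¹•s)). Then every multiplicative 1-cocycle of G in M is a 1-coboundary: if c : G → M satisfies c(στ) = c(σ)·(σ•c(τ)) for all σ, τ ∈ G, then there exists f ∈ M with c(σ) = (σ•f)·f⁻¹ for all σ ∈ G. -/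
/-!
This is Shapiro's lemma made explicit. Restricted to the stabilizer `H` of a point `s₀`,
`g ↦ c g s₀` is a cocycle with values in `Kˣ`; as `H = Gal(K/K^H)`, Hilbert 90 gives
`β` with `c g s₀ = g β / β` on `H`. Transporting `c g s₀ * β` back along any `g` with
`g s = s₀` gives a value at `s` independent of the choice of `g`, and doing this for one
representative `s₀` per orbit defines a function whose coboundary is `c`.
-/

/-- The action of `σ ∈ Gal(K/F)` on the group of functions `S → Kˣ`:
`(σ • f)(s) = σ(f(σ⁻¹ • s))`. -/
noncomputable def galUnitsAct {F K : Type*} [Field F] [Field K] [Algebra F K]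
    {S : Type*} [MulAction (K ≃ₐ[F] K) S]
    (σ : K ≃ₐ[F] K) (f : S → Kˣ) : S → Kˣ :=
  fun s => Units.map (σ : K →* K) (f (σ⁻¹ • s))

open groupCohomology MulAction

theorem isMulCoboundary₁_of_isMulCocycle₁_of_subgroup_aut_to_units {F K : Type*} [Field F]
    [Field K] [Algebra F K] [FiniteDimensional F K] (H : Subgroup (K ≃ₐ[F] K)) (f : H → Kˣ)
    (hf : IsMulCocycle₁ f) : IsMulCoboundary₁ f := by
  let E := IntermediateField.fixedField H
  let e : H ≃* (K ≃ₐ[E] K) :=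
    (MulEquiv.subgroupCongr (IntermediateField.fixingSubgroup_fixedField H)).symm.trans
      (IntermediateField.fixingSubgroupEquiv E)
  have he (h : H) (x : Kˣ) : e h • x = h • x := rfl
  obtain ⟨β, hβ⟩ := isMulCoboundary₁_of_isMulCocycle₁_of_aut_to_units (f ∘ e.symm)
    fun g h => by
      simpa only [Function.comp_apply, map_mul, ← he, e.apply_symm_apply]
        using hf (e.symm g) (e.symm h)
  exact ⟨β, fun h => by simpa only [he, Function.comp_apply, e.symm_apply_apply] using hβ (e h)⟩

theorem MulAction.exists_smul_smul_eq_smul {G S : Type*} [Group G] [MulAction G S] :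
    ∃ ρ : S → G, ∀ (σ : G) (s : S), ρ (σ • s) • σ • s = ρ s • s := by
  have h (s : S) : ∃ g : G, g • s = (Quotient.mk (orbitRel G S) s).out :=
    mem_orbit_iff.mp (orbitRel_apply.mp (Quotient.mk_out (s := orbitRel G S) s))
  choose ρ hρ using h
  refine ⟨ρ, fun σ s => ?_⟩
  rw [hρ, hρ, Quotient.sound (orbitRel_apply.mpr (mem_orbit s σ))]

section OrbitGluing

variable {G A S : Type*} [Group G] [CommGroup A] [MulDistribMulAction G A] [MulAction G S]
  {c : G → S → A}

theorem isMulCocycle₁_stabilizer_apply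
    (hc : ∀ σ τ s, c (σ * τ) s = c σ s * σ • c τ (σ⁻¹ • s)) (s : S) :
    IsMulCocycle₁ fun g : stabilizer G s => c g s := by
  intro g h
  have hg : (g : G)⁻¹ • s = s := inv_smul_eq_iff.mpr g.2.symm
  show c (g * h : G) s = (g : G) • c h s * c g s
  rw [hc, hg, mul_comm]

variable (c) in
def cocycleTransport (β : S → A) (g : G) (s : S) : A := g⁻¹ • (c g (g • s) * β (g • s))

theorem cocycleTransport_eq_of_smul_eq
    (hc : ∀ σ τ s, c (σ * τ) s = c σ s * σ • c τ (σ⁻¹ • s))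
    {β : S → A} (hβ : ∀ s, ∀ g : G, g • s = s → g • β s / β s = c g s) {g g' : G} {s : S}
    (hgs : g' • s = g • s) : cocycleTransport c β g' s = cocycleTransport c β g s := by
  obtain ⟨h, rfl⟩ : ∃ h, g' = h * g := ⟨g' * g⁻¹, by group⟩
  have hs : h • g • s = g • s := by rwa [← mul_smul]
  have hs' : h⁻¹ • g • s = g • s := inv_smul_eq_iff.mpr hs.symm
  simp only [cocycleTransport, mul_smul, hs, hc, hs', ← hβ _ h hs, mul_inv_rev]
  congr 1
  rw [smul_mul', smul_mul', smul_div', inv_smul_smul, inv_smul_smul,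
    mul_right_comm, div_mul_cancel, mul_comm]

theorem smul_cocycleTransport_mul (hc : ∀ σ τ s, c (σ * τ) s = c σ s * σ • c τ (σ⁻¹ • s))
    (β : S → A) (σ g : G) (s : S) :
    σ • cocycleTransport c β (g * σ) (σ⁻¹ • s) = cocycleTransport c β g s * c σ s := by
  simp only [cocycleTransport, mul_smul, smul_inv_smul, hc, inv_smul_smul, mul_inv_rev]
  rw [mul_right_comm (c g _), smul_mul', inv_smul_smul]

theorem exists_eq_smul_mul_inv_of_forall_stabilizer
    (hc : ∀ σ τ s, c (σ * τ) s = c σ s * σ • c τ (σ⁻¹ • s))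
    (h90 : ∀ (s : S) (φ : stabilizer G s → A), IsMulCocycle₁ φ → IsMulCoboundary₁ φ) :
    ∃ f : S → A, ∀ σ : G, c σ = (fun s => σ • f (σ⁻¹ • s)) * f⁻¹ := by
  choose β hβ using fun s => h90 s _ (isMulCocycle₁_stabilizer_apply hc s)
  obtain ⟨ρ, hρ⟩ := exists_smul_smul_eq_smul (G := G) (S := S)
  refine ⟨fun s => cocycleTransport c β (ρ s) s, fun σ => funext fun s => ?_⟩
  have hwd : cocycleTransport c β (ρ (σ⁻¹ • s)) (σ⁻¹ • s)
      = cocycleTransport c β (ρ s * σ) (σ⁻¹ • s) :=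
    cocycleTransport_eq_of_smul_eq hc (fun s g hg => hβ s ⟨g, hg⟩)
      (by rw [hρ, mul_smul, smul_inv_smul])
  simp only [Pi.mul_apply, Pi.inv_apply, hwd, smul_cocycleTransport_mul hc, mul_inv_cancel_comm]

end OrbitGluing

theorem stmt15_general {F K : Type*} [Field F] [Field K] [Algebra F K]
    [FiniteDimensional F K]
    {S : Type*} [MulAction (K ≃ₐ[F] K) S]
    (c : (K ≃ₐ[F] K) → (S → Kˣ))
    (hc : ∀ σ τ : K ≃ₐ[F] K, c (σ * τ) = c σ * galUnitsAct σ (c τ)) :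
    ∃ f : S → Kˣ, ∀ σ : K ≃ₐ[F] K, c σ = galUnitsAct σ f * f⁻¹ :=
  exists_eq_smul_mul_inv_of_forall_stabilizer (fun σ τ s => congrFun (hc σ τ) s)
    fun _ => isMulCoboundary₁_of_isMulCocycle₁_of_subgroup_aut_to_units _

/-- Vanishing of `H¹(Gal(K/F), Hom(ℤ[S], Kˣ))` for a finite Galois extension `K/F` and
a `Gal(K/F)`-set `S`: every `1`-cocycle with values in the group of `Kˣ`-valued
functions on `S` is a `1`-coboundary. -/
theorem stmt15 {F K : Type*} [Field F] [Field K] [Algebra F K]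
    [FiniteDimensional F K] [IsGalois F K]
    {S : Type*} [MulAction (K ≃ₐ[F] K) S]
    (c : (K ≃ₐ[F] K) → (S → Kˣ))
    (hc : ∀ σ τ : K ≃ₐ[F] K, c (σ * τ) = c σ * galUnitsAct σ (c τ)) :
    ∃ f : S → Kˣ, ∀ σ : K ≃ₐ[F] K, c σ = galUnitsAct σ f * f⁻¹ :=
  stmt15_general c hc
end

section
/- Let K/F be a finite Galois extension of fields with Galois group G, and let S be a G-set possessing a G-fixed point s₀ ∈ S. Let ℤ[S]₀ denote the kernel of the augmentation map from the free abelian group ℤ[S] on S to ℤ, and let M = Hom(ℤ[S]₀, Kˣ) be the group of homomorphisms from the additive group ℤ[S]₀ to the multiplicative group Kˣ, with G acting by (σ•f)(x) = σ(f(σ⁻¹•x)). Then every multiplicative 1-cocycle of G in M is a 1-coboundary: if c : G → M satisfies c(στ) = c(σ)·(σ•c(τ)) for all σ, τ ∈ G, then there exists f ∈ M with c(σ) = (σ•f)·f⁻¹ for all σ ∈ G. -/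
/-!
Writing `c σ s := c σ (s - s₀)` turns the cocycle into one with values in the permutation
module of maps `S → Kˣ`, and a coboundary `u : S → Kˣ` there extends multiplicatively to `f`
on `ℤ[S]₀`; the fixed point forces `u s₀` to be `G`-invariant, so `f(s - s₀) = u s / u s₀`
works. For the permutation module, Hilbert 90 is applied pointwise: with
`φ_s(z) = ∑_τ c τ s · τ z`, the cocycle identity gives `c σ s · σ(φ_{σ⁻¹ s}(z)) = φ_s(z)`,
so `u s := φ_s(z)⁻¹` works as soon as `z` is constant along orbits and `φ_s(z) ≠ 0`. By
Dedekind independence each `φ_s` is nonzero, and its nonvanishing at `z` is an orbit invariant.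
-/

/-- The augmentation map `ℤ[S] → ℤ`, `∑ n_s · s ↦ ∑ n_s`. -/
noncomputable def aug (S : Type*) : (S →₀ ℤ) →+ ℤ :=
  Finsupp.liftAddHom fun _ => AddMonoidHom.id ℤ

lemma aug_permHom {G : Type*} [Group G] {S : Type*} [MulAction G S] (g : G) (x : S →₀ ℤ) :
    aug S (permHom g x) = aug S x := by
  have h : (aug S).comp (permHom (G := G) (S := S) g) = aug S := by
    apply Finsupp.addHom_ext
    intro s n
    simp [aug, permHom, Finsupp.mapDomain.addMonoidHom, Finsupp.mapDomain_single]
  exact DFunLike.congr_fun h x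

/-- The action of `g : G` on `ℤ[S]₀ = ker(aug)`. -/
noncomputable def permHom0 {G : Type*} [Group G] {S : Type*} [MulAction G S]
    (g : G) : ↥(aug S).ker →+ ↥(aug S).ker :=
  AddMonoidHom.codRestrict ((permHom g).comp (aug S).ker.subtype) (aug S).ker
    (fun x => by
      have hx : aug S (x : S →₀ ℤ) = 0 := AddMonoidHom.mem_ker.mp x.2
      simpa [AddMonoidHom.mem_ker, aug_permHom] using hx)

namespace MulAction

lemma exists_smul_invariant_choice {G S α : Type*} [Group G] [MulAction G S]
    {P : S → α → Prop} (hP : ∀ (g : G) s a, P s a → P (g • s) a) (hex : ∀ s, ∃ a, P s a) :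
    ∃ z : S → α, (∀ (g : G) s, z (g • s) = z s) ∧ ∀ s, P s (z s) := by
  choose a ha using hex
  refine ⟨fun s => a (Quotient.mk (orbitRel G S) s).out, fun g s => ?_, fun s => ?_⟩
  · simp only [orbitRel.Quotient.quotient_smul_eq]
  · obtain ⟨g, hg⟩ := Quotient.mk_out (s := orbitRel G S) s
    simpa [← hg] using hP g⁻¹ _ _ (ha (Quotient.mk (orbitRel G S) s).out)

end MulAction

namespace groupCohomology.Hilbert90

variable {F K S : Type*} [Field F] [Field K] [Algebra F K] [FiniteDimensional F K]
  [MulAction (K ≃ₐ[F] K) S]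

lemma aux_apply (f : (K ≃ₐ[F] K) → Kˣ) (z : K) : aux f z = ∑ τ, (f τ : K) * τ z := by
  simp [aux, Finsupp.linearCombination, Finsupp.sum_fintype]

lemma mul_map_aux_of_cocycle {c : (K ≃ₐ[F] K) → S → Kˣ}
    (hc : ∀ σ τ s, c (σ * τ) s = c σ s * Units.map (σ : K →* K) (c τ (σ⁻¹ • s)))
    (σ : K ≃ₐ[F] K) (s : S) (z : K) :
    (c σ s : K) * σ (aux (fun τ => c τ (σ⁻¹ • s)) z) = aux (fun τ => c τ s) z := by
  simp only [aux_apply, map_sum, map_mul, Finset.mul_sum, ← mul_assoc]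
  refine Fintype.sum_bijective (σ * ·) (Group.mulLeft_bijective σ) _ _ fun τ => ?_
  simp [hc, AlgEquiv.mul_apply]

theorem exists_eq_map_mul_inv_of_cocycle {c : (K ≃ₐ[F] K) → S → Kˣ}
    (hc : ∀ σ τ s, c (σ * τ) s = c σ s * Units.map (σ : K →* K) (c τ (σ⁻¹ • s))) :
    ∃ u : S → Kˣ, ∀ σ s, c σ s = Units.map (σ : K →* K) (u (σ⁻¹ • s)) * (u s)⁻¹ := by
  obtain ⟨z, hz_smul, hz⟩ := MulAction.exists_smul_invariant_choice
    (P := fun s z => aux (fun τ => c τ s) z ≠ 0)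
    (fun σ s z h => by
      rw [← mul_map_aux_of_cocycle hc σ, inv_smul_smul]
      exact mul_ne_zero (Units.ne_zero _) ((map_ne_zero σ).2 h))
    (fun s => not_forall.1 fun h => aux_ne_zero _ (funext h))
  refine ⟨fun s => (Units.mk0 _ (hz s))⁻¹, fun σ s => Units.ext ?_⟩
  have hne := (map_ne_zero σ).2 (hz (σ⁻¹ • s))
  simp only [Units.val_mul, Units.coe_map, MonoidHom.coe_coe, Units.val_inv_eq_inv_val,
    Units.val_mk0, map_inv₀, inv_inv] at hne ⊢
  rw [hz_smul] at hne ⊢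
  rw [← mul_map_aux_of_cocycle hc σ s (z s)]
  field_simp

end groupCohomology.Hilbert90

section AugmentationKernel

variable {S : Type*}

@[simp]
lemma aug_single (s : S) (n : ℤ) : aug S (Finsupp.single s n) = n := by
  simp [aug]

noncomputable def kerAugSingle (s₀ s : S) : (aug S).ker :=
  ⟨Finsupp.single s 1 - Finsupp.single s₀ 1, by simp⟩

@[simp]
lemma kerAugSingle_self (s₀ : S) : kerAugSingle s₀ s₀ = 0 := by
  simp [kerAugSingle]

lemma permHom0_kerAugSingle {G : Type*} [Group G] [MulAction G S] {g : G} {s₀ : S}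
    (h : g • s₀ = s₀) (s : S) : permHom0 g (kerAugSingle s₀ s) = kerAugSingle s₀ (g • s) := by
  ext1
  simp [permHom0, permHom, kerAugSingle, Finsupp.mapDomain.addMonoidHom, Finsupp.mapDomain_sub, h]

noncomputable def projKerAug (s₀ : S) : (S →₀ ℤ) →+ (aug S).ker :=
  AddMonoidHom.codRestrict (AddMonoidHom.id _ - (Finsupp.singleAddHom s₀).comp (aug S))
    (aug S).ker fun x => by simp

lemma projKerAug_coe (s₀ : S) (x : (aug S).ker) : projKerAug s₀ (x : S →₀ ℤ) = x := by
  ext1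
  simp [projKerAug, AddMonoidHom.mem_ker.mp x.2]

lemma projKerAug_single (s₀ s : S) (n : ℤ) :
    projKerAug s₀ (Finsupp.single s n) = n • kerAugSingle s₀ s := by
  ext1
  simp [projKerAug, kerAugSingle, smul_sub]

lemma kerAug_funext {M : Type*} [CommGroup M] (s₀ : S) {φ ψ : (aug S).ker → M}
    (hφ : ∀ x y, φ (x + y) = φ x * φ y) (hψ : ∀ x y, ψ (x + y) = ψ x * ψ y)
    (h : ∀ s, φ (kerAugSingle s₀ s) = ψ (kerAugSingle s₀ s)) : φ = ψ := by
  let Φ : (aug S).ker →+ Additive M := AddMonoidHom.mk' (fun x => .ofMul (φ x)) hφ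
  let Ψ : (aug S).ker →+ Additive M := AddMonoidHom.mk' (fun x => .ofMul (ψ x)) hψ
  have hproj : Φ.comp (projKerAug s₀) = Ψ.comp (projKerAug s₀) :=
    Finsupp.addHom_ext fun s n => by
      simp only [AddMonoidHom.comp_apply, projKerAug_single, map_zsmul]
      exact congrArg (n • ·) (congrArg Additive.ofMul (h s))
  funext x
  have hx := DFunLike.congr_fun hproj (x : S →₀ ℤ)
  rw [AddMonoidHom.comp_apply, AddMonoidHom.comp_apply, projKerAug_coe] at hx
  exact congrArg Additive.toMul hx

end AugmentationKernel

theorem stmt16_general {F K : Type*} [Field F] [Field K] [Algebra F K]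
    [FiniteDimensional F K]
    {S : Type*} [MulAction (K ≃ₐ[F] K) S]
    (s₀ : S) (hs₀ : ∀ σ : K ≃ₐ[F] K, σ • s₀ = s₀)
    (c : (K ≃ₐ[F] K) → (↥(aug S).ker → Kˣ))
    (hhom : ∀ (σ : K ≃ₐ[F] K) (x y : ↥(aug S).ker), c σ (x + y) = c σ x * c σ y)
    (hc : ∀ (σ τ : K ≃ₐ[F] K) (x : ↥(aug S).ker),
        c (σ * τ) x = c σ x * Units.map (σ : K →* K) (c τ (permHom0 σ⁻¹ x))) :
    ∃ f : ↥(aug S).ker → Kˣ,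
      (∀ x y : ↥(aug S).ker, f (x + y) = f x * f y) ∧
      ∀ (σ : K ≃ₐ[F] K) (x : ↥(aug S).ker),
        c σ x = Units.map (σ : K →* K) (f (permHom0 σ⁻¹ x)) * (f x)⁻¹ := by
  obtain ⟨u, hu⟩ := groupCohomology.Hilbert90.exists_eq_map_mul_inv_of_cocycle
    (c := fun σ s => c σ (kerAugSingle s₀ s))
    fun σ τ s => by simp only [hc, permHom0_kerAugSingle (hs₀ σ⁻¹)]
  have hu₀ (σ : K ≃ₐ[F] K) : Units.map (σ : K →* K) (u s₀) = u s₀ := by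
    have h := hu σ s₀
    rwa [hs₀, kerAugSingle_self, (by simpa using hhom σ 0 0 : c σ 0 = 1), eq_comm,
      mul_inv_eq_one] at h
  let f : (aug S).ker → Kˣ := fun x => (x : S →₀ ℤ).prod fun s n => u s ^ n
  have hf (x y : (aug S).ker) : f (x + y) = f x * f y :=
    Finsupp.prod_add_index' (fun _ => zpow_zero _) fun _ => zpow_add _
  have hf_single (s : S) : f (kerAugSingle s₀ s) = u s * (u s₀)⁻¹ := by
    simp only [f, kerAugSingle, sub_eq_add_neg, ← Finsupp.single_neg]
    rw [Finsupp.prod_add_index' (fun _ => zpow_zero _) fun _ => zpow_add _,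
      Finsupp.prod_single_index (zpow_zero _), Finsupp.prod_single_index (zpow_zero _)]
    simp
  refine ⟨f, hf, fun σ => congrFun (kerAug_funext s₀ (hhom σ) (fun x y => ?_) fun s => ?_)⟩
  · simp only [map_add, hf, map_mul, mul_inv]
    ac_rfl
  · rw [permHom0_kerAugSingle (hs₀ σ⁻¹), hf_single, hf_single, hu, map_mul, map_inv, hu₀]
    group

/-- Vanishing of `H¹(Gal(K/F), Hom(ℤ[S]₀, Kˣ))` for a finite Galois extension `K/F` and
a `Gal(K/F)`-set `S` with a fixed point `s₀` (Lemma "LocWorksWell(1)"): every `1`-cocycle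
valued in the group of homomorphisms `ℤ[S]₀ → Kˣ` is a `1`-coboundary. -/
theorem stmt16 {F K : Type*} [Field F] [Field K] [Algebra F K]
    [FiniteDimensional F K] [IsGalois F K]
    {S : Type*} [MulAction (K ≃ₐ[F] K) S]
    (s₀ : S) (hs₀ : ∀ σ : K ≃ₐ[F] K, σ • s₀ = s₀)
    (c : (K ≃ₐ[F] K) → (↥(aug S).ker → Kˣ))
    (hhom : ∀ (σ : K ≃ₐ[F] K) (x y : ↥(aug S).ker), c σ (x + y) = c σ x * c σ y)
    (hc : ∀ (σ τ : K ≃ₐ[F] K) (x : ↥(aug S).ker),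
        c (σ * τ) x = c σ x * Units.map (σ : K →* K) (c τ (permHom0 σ⁻¹ x))) :
    ∃ f : ↥(aug S).ker → Kˣ,
      (∀ x y : ↥(aug S).ker, f (x + y) = f x * f y) ∧
      ∀ (σ : K ≃ₐ[F] K) (x : ↥(aug S).ker),
        c σ x = Units.map (σ : K →* K) (f (permHom0 σ⁻¹ x)) * (f x)⁻¹ :=
  stmt16_general s₀ hs₀ c hhom hc
end

section
/- Let G be a group and M a G-module, and let a : G × G → M be a 2-cocycle of G in M. Then the function a' : G × G → M defined by a'(σ,τ) := −(στ)•a(τ⁻¹, σ⁻¹) is a 2-cocycle of G in M, and a' is cohomologous to a: a' − a is a 2-coboundary of G in M. -/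
/-- The twisted `2`-cochain `a'(σ,τ) = −(στ) • a(τ⁻¹, σ⁻¹)`. -/
def twistedCocycle {G M : Type*} [Group G] [AddCommGroup M] [DistribMulAction G M]
    (a : G → G → M) : G → G → M :=
  fun σ τ => -((σ * τ) • a τ⁻¹ σ⁻¹)

/-- If `a` is a `2`-cocycle of `G` in `M`, then `a'(σ,τ) = −(στ) • a(τ⁻¹, σ⁻¹)` is again
a `2`-cocycle, and `a' − a` is a `2`-coboundary. -/
theorem stmt17 {G M : Type*} [Group G] [AddCommGroup M] [DistribMulAction G M]
    (a : G → G → M)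
    (ha : ∀ σ τ υ : G, σ • a τ υ - a (σ * τ) υ + a σ (τ * υ) - a σ τ = 0) :
    (∀ σ τ υ : G,
        σ • twistedCocycle a τ υ - twistedCocycle a (σ * τ) υ +
          twistedCocycle a σ (τ * υ) - twistedCocycle a σ τ = 0) ∧
    (∃ b : G → M, ∀ σ τ : G,
        twistedCocycle a σ τ - a σ τ = σ • b τ - b (σ * τ) + b σ) := by
  -- `a 1 x = a 1 1`
  have h1 : ∀ x : G, a 1 x = a 1 1 := by
    intro x
    have h := ha 1 1 x
    simp only [one_smul, one_mul] at h
    rw [← sub_eq_zero]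
    abel_nf at h ⊢
    exact h
  -- `a x 1 = x • a 1 1`
  have h2 : ∀ x : G, x • a 1 1 = a x 1 := by
    intro x
    have h := ha x 1 1
    simp only [mul_one, one_mul] at h
    rw [← sub_eq_zero]
    abel_nf at h ⊢
    exact h
  constructor
  · intro σ τ υ
    have h := congrArg (fun m => (σ * τ * υ) • m) (ha υ⁻¹ τ⁻¹ σ⁻¹)
    simp only [twistedCocycle, smul_neg, neg_neg, smul_sub, smul_add, smul_smul, smul_zero,
      mul_inv_rev, mul_assoc, mul_inv_cancel_left, inv_mul_cancel_left, mul_inv_cancel,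
      inv_mul_cancel, mul_one, one_mul] at h ⊢
    abel_nf at h ⊢
    exact h
  · refine ⟨fun σ => -(σ • a σ⁻¹ σ) - σ • a 1 1, fun σ τ => ?_⟩
    -- rearranged cocycle identities
    have hB2 : a τ (τ⁻¹ * σ⁻¹) = a 1 1 + a τ τ⁻¹ - τ • a τ⁻¹ σ⁻¹ := by
      have h := ha τ τ⁻¹ σ⁻¹
      simp only [mul_inv_cancel] at h
      rw [h1 σ⁻¹] at h
      rw [← sub_eq_zero]
      abel_nf at h ⊢
      exact h
    have hE2 : τ • a τ⁻¹ τ - a 1 1 + τ • a 1 1 = a τ τ⁻¹ := by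
      have h := ha τ τ⁻¹ τ
      simp only [mul_inv_cancel, inv_mul_cancel] at h
      rw [h1 τ, ← h2 τ] at h
      rw [← sub_eq_zero]
      abel_nf at h ⊢
      exact h
    have hD2 : σ • a σ⁻¹ σ - a 1 1 + σ • a 1 1 = a σ σ⁻¹ := by
      have h := ha σ σ⁻¹ σ
      simp only [mul_inv_cancel, inv_mul_cancel] at h
      rw [h1 σ, ← h2 σ] at h
      rw [← sub_eq_zero]
      abel_nf at h ⊢
      exact h
    have hC2 : (σ * τ) • a (τ⁻¹ * σ⁻¹) (σ * τ) - a 1 1 + (σ * τ) • a 1 1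
        = a (σ * τ) (τ⁻¹ * σ⁻¹) := by
      have h := ha (σ * τ) (τ⁻¹ * σ⁻¹) (σ * τ)
      simp only [mul_assoc, mul_inv_cancel_left, inv_mul_cancel_left, mul_inv_cancel,
        inv_mul_cancel, mul_one, one_mul] at h
      rw [h1 (σ * τ), ← h2 (σ * τ)] at h
      rw [← sub_eq_zero]
      abel_nf at h ⊢
      exact h
    have hA := ha σ τ (τ⁻¹ * σ⁻¹)
    simp only [mul_inv_cancel_left] at hA
    rw [hB2, ← hE2, ← hC2, ← hD2] at hA
    simp only [smul_add, smul_sub, smul_smul, smul_neg] at hA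
    rw [← sub_eq_zero]
    simp only [twistedCocycle, mul_inv_rev, smul_add, smul_sub, smul_neg, neg_neg, smul_smul]
    abel_nf at hA ⊢
    exact hA
end
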